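/- arXiv:2002.08545 — 10 statements merged into one kernel-verified Lean document; each statement's English description precedes it below -/
import Mathlib

section
/- Let p* ∈ (0,1) and let P be a random variable uniformly distributed on [0,1]. Define the missing bit h(P) = 1 if P < p* and h(P) = -1 otherwise, and the masked p-value g(P) = min{P, (p*/(1-p*))(1-P)} (the tent masking). Then h(P) and g(P) are independent, h(P) = 1 with probability p*, and g(P) is uniformly distributed on (0, p*). -/
/-!
On `[0, p*)` the tent map is the identity, and on `[p*, 1]` it is the decreasing affine bijection
`x ↦ p*/(1-p*) · (1 - x)` onto `[0, p*]`, which scales Lebesgue measure by `(1-p*)/p*`. Hence,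
conditionally on either value of the missing bit, the masked p-value is uniform on `(0, p*)`.
A two-valued variable is independent of `g` as soon as the conditional laws of `g` given its two
values agree, and that common law is then the law of `g`.
-/

open MeasureTheory ProbabilityTheory Set

theorem Set.Iio_inter_Icc_of_le {α : Type*} [LinearOrder α] {a b c : α} (h : c ≤ b) :
    Iio c ∩ Icc a b = Ico a c :=
  ext fun _ => ⟨fun ⟨hc, ha, _⟩ => ⟨ha, hc⟩, fun ⟨ha, hc⟩ => ⟨hc, ha, hc.le.trans h⟩⟩

theorem Set.compl_Iio_inter_Icc_of_le {α : Type*} [LinearOrder α] {a b c : α} (h : a ≤ c) :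
    (Iio c)ᶜ ∩ Icc a b = Icc c b :=
  ext fun _ => ⟨fun ⟨hc, _, hb⟩ => ⟨not_lt.1 hc, hb⟩, fun ⟨hc, hb⟩ => ⟨not_lt.2 hc, h.trans hc, hb⟩⟩

section IndependentBit

variable {α β γ Ω : Type*} [MeasurableSpace α] [MeasurableSpace β] [MeasurableSpace γ]
  [MeasurableSpace Ω]

theorem ProbabilityTheory.IndepFun.comp_of_map {μ : Measure Ω} {P : Ω → α} (hP : Measurable P)
    {f : α → β} {g : α → γ} (hf : Measurable f) (hg : Measurable g)
    (h : IndepFun f g (μ.map P)) : IndepFun (f ∘ P) (g ∘ P) μ := by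
  rw [indepFun_iff_measure_inter_preimage_eq_mul] at h ⊢
  intro s t hs ht
  have := h s t hs ht
  rwa [Measure.map_apply hP ((hf hs).inter (hg ht)), Measure.map_apply hP (hf hs),
    Measure.map_apply hP (hg ht)] at this

variable {ν : Measure α} [IsProbabilityMeasure ν] {A : Set α} {g : α → β} {ρ : Measure β}

theorem MeasureTheory.Measure.map_eq_of_map_restrict_eq_smul (hA : MeasurableSet A)
    (hg : Measurable g) (h₁ : (ν.restrict A).map g = ν A • ρ)
    (h₂ : (ν.restrict Aᶜ).map g = ν Aᶜ • ρ) : ν.map g = ρ := by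
  rw [← Measure.restrict_add_restrict_compl (μ := ν) hA, Measure.map_add _ _ hg, h₁, h₂,
    ← add_smul, prob_add_prob_compl hA, one_smul]

theorem ProbabilityTheory.indepFun_ite_of_map_restrict_eq_smul {q : α → Prop} [DecidablePred q]
    (hq : MeasurableSet {x | q x}) (hg : Measurable g) (a b : γ)
    (h₁ : (ν.restrict {x | q x}).map g = ν {x | q x} • ρ)
    (h₂ : (ν.restrict {x | q x}ᶜ).map g = ν {x | q x}ᶜ • ρ) :
    IndepFun (fun x => if q x then a else b) g ν := by
  have hmap := Measure.map_eq_of_map_restrict_eq_smul hq hg h₁ h₂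
  have factor : ∀ B, (ν.restrict B).map g = ν B • ρ →
      ∀ t, MeasurableSet t → ν (B ∩ g ⁻¹' t) = ν B * ν (g ⁻¹' t) := by
    intro B hBg t ht
    rw [inter_comm, ← Measure.restrict_apply (hg ht), ← Measure.map_apply hg ht, hBg,
      ← hmap, Measure.smul_apply, smul_eq_mul, Measure.map_apply hg ht]
  rw [indepFun_iff_measure_inter_preimage_eq_mul]
  intro s t hs ht
  by_cases ha : a ∈ s <;> by_cases hb : b ∈ s
  · have : (fun x => if q x then a else b) ⁻¹' s = univ := by
      ext x; by_cases q x <;> simp [*]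
    simp [this]
  · have : (fun x => if q x then a else b) ⁻¹' s = {x | q x} := by
      ext x; by_cases q x <;> simp [*]
    rw [this, factor _ h₁ t ht]
  · have : (fun x => if q x then a else b) ⁻¹' s = {x | q x}ᶜ := by
      ext x; by_cases q x <;> simp [*]
    rw [this, factor _ h₂ t ht]
  · have : (fun x => if q x then a else b) ⁻¹' s = ∅ := by
      ext x; by_cases q x <;> simp [*]
    simp [this]

end IndependentBit

theorem Real.map_volume_mul_sub {a : ℝ} (ha : a ≠ 0) (b : ℝ) :
    volume.map (fun x : ℝ => a * (b - x)) = ENNReal.ofReal |a⁻¹| • volume := by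
  have : (fun x : ℝ => a * (b - x)) = (a * ·) ∘ (b - ·) := rfl
  rw [this, ← Measure.map_map (measurable_const_mul a) (measurable_const_sub b),
    Measure.map_sub_left_eq_self, Real.map_volume_mul_left ha]

noncomputable def tentMask (p x : ℝ) : ℝ := min x (p / (1 - p) * (1 - x))

section TentMask

variable {p : ℝ}

theorem measurable_tentMask (p : ℝ) : Measurable (tentMask p) := by
  unfold tentMask; fun_prop

theorem tentMask_of_lt (hp : p < 1) {x : ℝ} (hx : x < p) : tentMask p x = x := by
  have h1p : 0 < 1 - p := by linarith
  refine min_eq_left ?_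
  rw [div_mul_eq_mul_div, le_div_iff₀ h1p]
  nlinarith

theorem tentMask_of_le (hp : p < 1) {x : ℝ} (hx : p ≤ x) :
    tentMask p x = p / (1 - p) * (1 - x) := by
  have h1p : 0 < 1 - p := by linarith
  refine min_eq_right ?_
  rw [div_mul_eq_mul_div, div_le_iff₀ h1p]
  nlinarith

theorem map_restrict_Ico_tentMask (hp : p < 1) :
    (volume.restrict (Ico 0 p)).map (tentMask p) = volume.restrict (Ioo 0 p) := by
  have : tentMask p =ᵐ[volume.restrict (Ico 0 p)] id :=
    ae_restrict_of_forall_mem measurableSet_Ico fun x hx => tentMask_of_lt hp hx.2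
  rw [Measure.map_congr this, Measure.map_id, Measure.restrict_congr_set Ioo_ae_eq_Ico]

theorem map_restrict_Icc_tentMask (hp : p ∈ Ioo 0 1) :
    (volume.restrict (Icc p 1)).map (tentMask p)
      = ENNReal.ofReal ((1 - p) / p) • volume.restrict (Ioo 0 p) := by
  obtain ⟨hp0, hp1⟩ := hp
  have h1p : 0 < 1 - p := by linarith
  set φ : ℝ → ℝ := fun x => p / (1 - p) * (1 - x)
  have hc : p / (1 - p) ≠ 0 := (div_pos hp0 h1p).ne'
  have hφm : Measurable φ := by fun_prop
  have hpre : φ ⁻¹' Icc 0 p = Icc p 1 := by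
    ext x
    simp only [φ, mem_preimage, mem_Icc, div_mul_eq_mul_div, le_div_iff₀ h1p, div_le_iff₀ h1p]
    constructor <;> rintro ⟨h₁, h₂⟩ <;> constructor <;> nlinarith
  have : tentMask p =ᵐ[volume.restrict (Icc p 1)] φ :=
    ae_restrict_of_forall_mem measurableSet_Icc fun x hx => tentMask_of_le hp1 hx.1
  rw [Measure.map_congr this, ← hpre, ← Measure.restrict_map hφm measurableSet_Icc,
    Real.map_volume_mul_sub hc, Measure.restrict_smul, Measure.restrict_congr_set Ioo_ae_eq_Icc,
    inv_div, abs_of_pos (div_pos h1p hp0)]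

theorem volume_restrict_Icc_zero_one_Iio (hp : p ≤ 1) :
    volume.restrict (Icc 0 1) (Iio p) = ENNReal.ofReal p := by
  rw [Measure.restrict_apply measurableSet_Iio, Iio_inter_Icc_of_le hp, Real.volume_Ico, sub_zero]

theorem map_restrict_Iio_tentMask (hp : p ∈ Ioo 0 1) :
    ((volume.restrict (Icc 0 1)).restrict (Iio p)).map (tentMask p)
      = volume.restrict (Icc 0 1) (Iio p) •
          (ENNReal.ofReal p)⁻¹ • volume.restrict (Ioo 0 p) := by
  rw [Measure.restrict_restrict measurableSet_Iio, Iio_inter_Icc_of_le hp.2.le,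
    map_restrict_Ico_tentMask hp.2, volume_restrict_Icc_zero_one_Iio hp.2.le, smul_smul,
    ENNReal.mul_inv_cancel (by simpa using hp.1) ENNReal.ofReal_ne_top, one_smul]

theorem map_restrict_compl_Iio_tentMask (hp : p ∈ Ioo 0 1) :
    ((volume.restrict (Icc 0 1)).restrict (Iio p)ᶜ).map (tentMask p)
      = volume.restrict (Icc 0 1) (Iio p)ᶜ •
          (ENNReal.ofReal p)⁻¹ • volume.restrict (Ioo 0 p) := by
  have hset := compl_Iio_inter_Icc_of_le hp.1.le (b := 1)
  rw [Measure.restrict_restrict measurableSet_Iio.compl, hset, map_restrict_Icc_tentMask hp,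
    Measure.restrict_apply measurableSet_Iio.compl, hset, Real.volume_Icc, smul_smul,
    ← ENNReal.ofReal_inv_of_pos hp.1, ← ENNReal.ofReal_mul (by linarith [hp.2]), div_eq_mul_inv]

end TentMask

/-- For `P` uniform on `[0,1]` and tent masking with parameter `p* ∈ (0,1)`,
the missing bit `h(P) = if P < p* then 1 else -1` and the masked p-value
`g(P) = min(P, p*/(1-p*)·(1-P))` are independent, `h(P) = 1` with probability `p*`,
and `g(P)` is uniformly distributed on `(0, p*)`. -/
theorem tent_masking_independent
    {Ω : Type*} [MeasurableSpace Ω] (μ : Measure Ω) [IsProbabilityMeasure μ]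
    (pstar : ℝ) (hp : pstar ∈ Set.Ioo (0:ℝ) 1)
    (P : Ω → ℝ) (hPm : Measurable P)
    (hunif : μ.map P = volume.restrict (Set.Icc 0 1)) :
    IndepFun (fun ω => if P ω < pstar then (1:ℝ) else -1)
        (fun ω => min (P ω) (pstar / (1 - pstar) * (1 - P ω))) μ ∧
    μ {ω | (if P ω < pstar then (1:ℝ) else -1) = 1} = ENNReal.ofReal pstar ∧
    μ.map (fun ω => min (P ω) (pstar / (1 - pstar) * (1 - P ω)))
      = (ENNReal.ofReal pstar)⁻¹ • volume.restrict (Set.Ioo 0 pstar) := by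
  have : IsProbabilityMeasure (volume.restrict (Icc (0:ℝ) 1)) :=
    hunif ▸ Measure.isProbabilityMeasure_map hPm.aemeasurable
  have hmask := measurable_tentMask pstar
  have h₁ := map_restrict_Iio_tentMask hp
  have h₂ := map_restrict_compl_Iio_tentMask hp
  refine ⟨?_, ?_, ?_⟩
  · have hindep :=
      indepFun_ite_of_map_restrict_eq_smul measurableSet_Iio hmask (1 : ℝ) (-1) h₁ h₂
    rw [← hunif] at hindep
    exact hindep.comp_of_map hPm (measurable_const.ite measurableSet_Iio measurable_const) hmask
  · have : {ω | (if P ω < pstar then (1:ℝ) else -1) = 1} = P ⁻¹' Iio pstar := by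
      ext ω; by_cases h : P ω < pstar <;> norm_num [h]
    rw [this, ← Measure.map_apply hPm measurableSet_Iio, hunif,
      volume_restrict_Icc_zero_one_Iio hp.2.le]
  · change μ.map (tentMask pstar ∘ P) = _
    rw [← Measure.map_map hmask hPm, hunif,
      Measure.map_eq_of_map_restrict_eq_smul measurableSet_Iio hmask h₁ h₂]
end

section
/- Let p* ∈ (0,1) and let P be a random variable uniformly distributed on [0,1]. Define h(P) = 1 if P < p* and h(P) = -1 otherwise, and the railway masking g(P) = P if 0 ≤ P < p*, and g(P) = (p*/(1-p*))(P - p*) if p* ≤ P ≤ 1. Then h(P) and g(P) are independent, h(P) = 1 with probability p*, and g(P) is uniformly distributed on (0, p*). -/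
/-!
On `[0, p*)` the railway map is the identity, and on `[p*, 1]` it is the increasing affine
bijection onto `[0, p*]` of slope `p*/(1-p*)`. So for `P` uniform and any Borel `t`, the event
`{P < p*, g(P) ∈ t}` has probability `λ(t ∩ (0,p*))`, while `{P ≥ p*, g(P) ∈ t}` has probability
`(1-p*)/p*` times that. Summing, `ℙ(g(P) ∈ t) = λ(t ∩ (0,p*)) / p*`, hence
`ℙ(P < p*, g(P) ∈ t) = ℙ(P < p*) ℙ(g(P) ∈ t)`; since `h(P)` is a function of the event
`{P < p*}`, a π-system argument upgrades this to independence.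
-/

open MeasureTheory ProbabilityTheory Set

lemma indepFun_ite_of_measure_inter_preimage {Ω β γ : Type*} {mΩ : MeasurableSpace Ω}
    [MeasurableSpace β] [mγ : MeasurableSpace γ] {μ : Measure Ω} [IsProbabilityMeasure μ]
    {q : Ω → Prop} [DecidablePred q] (hq : MeasurableSet {ω | q ω}) {X : Ω → γ}
    (hX : Measurable X) (a b : β)
    (h : ∀ t, MeasurableSet t → μ ({ω | q ω} ∩ X ⁻¹' t) = μ {ω | q ω} * μ (X ⁻¹' t)) :
    IndepFun (fun ω => if q ω then a else b) X μ := by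
  have hindep : Indep (MeasurableSpace.generateFrom {{ω | q ω}}) (mγ.comap X) μ := by
    refine IndepSets.indep (MeasurableSpace.generateFrom_le (by simpa using hq)) hX.comap_le
      (IsPiSystem.singleton _) (@MeasurableSpace.isPiSystem_measurableSet Ω (mγ.comap X)) rfl
      (@MeasurableSpace.generateFrom_measurableSet Ω (mγ.comap X)).symm ?_
    rw [IndepSets_iff]
    rintro _ _ rfl ⟨t, ht, rfl⟩
    exact h t ht
  rw [IndepFun_iff_Indep]
  refine indep_of_indep_of_le_left hindep (Measurable.comap_le ?_)
  exact Measurable.ite (MeasurableSpace.measurableSet_generateFrom rfl) measurable_const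
    measurable_const

lemma volume_preimage_mul_sub {c : ℝ} (hc : c ≠ 0) (a : ℝ) (s : Set ℝ) :
    volume ((fun x => c * (x - a)) ⁻¹' s) = ENNReal.ofReal |c⁻¹| * volume s := by
  have htrans : (fun x : ℝ => x - a) = (· + -a) := funext fun x => sub_eq_add_neg x a
  change volume ((fun x => x - a) ⁻¹' ((c * ·) ⁻¹' s)) = _
  rw [htrans, measure_preimage_add_right, Real.volume_preimage_mul_left hc]

noncomputable def railway (p x : ℝ) : ℝ := if x < p then x else p / (1 - p) * (x - p)

section Railway

variable {p : ℝ}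

lemma measurable_railway : Measurable (railway p) :=
  Measurable.ite measurableSet_Iio measurable_id (measurable_const.mul (measurable_id.sub_const p))

lemma railway_preimage_inter_Iio_inter_Icc (hp : p ≤ 1) (t : Set ℝ) :
    railway p ⁻¹' t ∩ Iio p ∩ Icc 0 1 = t ∩ Ico 0 p := by
  ext x
  simp only [railway, mem_inter_iff, mem_preimage, mem_Iio, mem_Icc, mem_Ico]
  grind

lemma railway_preimage_diff_Iio_inter_Icc (hp0 : 0 < p) (hp1 : p < 1) (t : Set ℝ) :
    (railway p ⁻¹' t \ Iio p) ∩ Icc 0 1 = (fun x => p / (1 - p) * (x - p)) ⁻¹' (t ∩ Icc 0 p) := by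
  ext x
  simp only [railway, mem_inter_iff, mem_sdiff, mem_preimage, mem_Iio, mem_Icc, not_lt]
  have hq : 0 < 1 - p := by linarith
  constructor
  · rintro ⟨⟨hxt, hpx⟩, -, hx1⟩
    rw [if_neg (not_lt.2 hpx)] at hxt
    refine ⟨hxt, by positivity, ?_⟩
    rw [div_mul_eq_mul_div, div_le_iff₀ hq]; nlinarith
  · rintro ⟨hxt, h0, h1⟩
    rw [div_mul_eq_mul_div, div_le_iff₀ hq] at h1
    rw [div_mul_eq_mul_div, le_div_iff₀ hq] at h0
    have hpx : p ≤ x := by nlinarith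
    exact ⟨⟨by rwa [if_neg (not_lt.2 hpx)], hpx⟩, by linarith, by nlinarith⟩

lemma restrict_Icc_railway_preimage_inter_Iio (hp : p ≤ 1) (t : Set ℝ) :
    volume.restrict (Icc 0 1) (railway p ⁻¹' t ∩ Iio p) = volume (t ∩ Ioo 0 p) := by
  rw [Measure.restrict_apply' measurableSet_Icc, railway_preimage_inter_Iio_inter_Icc hp]
  exact measure_congr ((ae_eq_refl t).inter Ioo_ae_eq_Ico.symm)

lemma restrict_Icc_railway_preimage_diff_Iio (hp0 : 0 < p) (hp1 : p < 1) (t : Set ℝ) :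
    volume.restrict (Icc 0 1) (railway p ⁻¹' t \ Iio p)
      = ENNReal.ofReal ((1 - p) / p) * volume (t ∩ Ioo 0 p) := by
  have hc : p / (1 - p) ≠ 0 := (div_pos hp0 (by linarith)).ne'
  rw [Measure.restrict_apply' measurableSet_Icc, railway_preimage_diff_Iio_inter_Icc hp0 hp1,
    volume_preimage_mul_sub hc, inv_div, abs_of_pos (div_pos (by linarith) hp0)]
  congr 1
  exact measure_congr ((ae_eq_refl t).inter Ioo_ae_eq_Icc.symm)

lemma restrict_Icc_railway_preimage (hp0 : 0 < p) (hp1 : p < 1) (t : Set ℝ) :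
    volume.restrict (Icc 0 1) (railway p ⁻¹' t)
      = (ENNReal.ofReal p)⁻¹ * volume (t ∩ Ioo 0 p) := by
  have hinv : (ENNReal.ofReal p)⁻¹ = 1 + ENNReal.ofReal ((1 - p) / p) := by
    rw [← ENNReal.ofReal_inv_of_pos hp0, ← ENNReal.ofReal_one,
      ← ENNReal.ofReal_add zero_le_one (div_nonneg (by linarith) hp0.le)]
    congr 1
    field_simp
    ring
  rw [← measure_inter_add_sdiff _ measurableSet_Iio,
    restrict_Icc_railway_preimage_inter_Iio hp1.le, restrict_Icc_railway_preimage_diff_Iio hp0 hp1,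
    hinv, add_mul, one_mul]

end Railway

/-- For `P` uniform on `[0,1]` and railway masking with parameter `p* ∈ (0,1)`,
the missing bit `h(P) = if P < p* then 1 else -1` and the masked p-value
`g(P) = P` for `P < p*`, `g(P) = p*/(1-p*)·(P - p*)` for `P ≥ p*`, are independent,
`h(P) = 1` with probability `p*`, and `g(P)` is uniformly distributed on `(0, p*)`. -/
theorem railway_masking_independent
    {Ω : Type*} [MeasurableSpace Ω] (μ : Measure Ω) [IsProbabilityMeasure μ]
    (pstar : ℝ) (hp : pstar ∈ Set.Ioo (0:ℝ) 1)
    (P : Ω → ℝ) (hPm : Measurable P)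
    (hunif : μ.map P = volume.restrict (Set.Icc 0 1)) :
    IndepFun (fun ω => if P ω < pstar then (1:ℝ) else -1)
        (fun ω => if P ω < pstar then P ω else pstar / (1 - pstar) * (P ω - pstar)) μ ∧
    μ {ω | (if P ω < pstar then (1:ℝ) else -1) = 1} = ENNReal.ofReal pstar ∧
    μ.map (fun ω => if P ω < pstar then P ω else pstar / (1 - pstar) * (P ω - pstar))
      = (ENNReal.ofReal pstar)⁻¹ • volume.restrict (Set.Ioo 0 pstar) := by
  obtain ⟨hp0, hp1⟩ := hp
  have hlaw {S : Set ℝ} (hS : MeasurableSet S) : μ (P ⁻¹' S) = volume.restrict (Icc 0 1) S := by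
    rw [← Measure.map_apply hPm hS, hunif]
  have hA : μ (P ⁻¹' Iio pstar) = ENNReal.ofReal pstar := by
    simpa [hlaw measurableSet_Iio] using restrict_Icc_railway_preimage_inter_Iio hp1.le univ
  have hg {t : Set ℝ} (ht : MeasurableSet t) : μ ((railway pstar ∘ P) ⁻¹' t)
      = (ENNReal.ofReal pstar)⁻¹ * volume (t ∩ Ioo 0 pstar) := by
    rw [preimage_comp, hlaw (measurable_railway ht), restrict_Icc_railway_preimage hp0 hp1]
  refine ⟨?_, ?_, ?_⟩
  · refine indepFun_ite_of_measure_inter_preimage (hPm measurableSet_Iio)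
      (measurable_railway.comp hPm) _ _ fun t ht => ?_
    change μ (P ⁻¹' Iio pstar ∩ _) = μ (P ⁻¹' Iio pstar) * _
    rw [hA, hg ht, ← mul_assoc, ENNReal.mul_inv_cancel (by simpa using hp0) ENNReal.ofReal_ne_top,
      one_mul, preimage_comp, ← preimage_inter,
      hlaw (measurableSet_Iio.inter (measurable_railway ht)), inter_comm,
      restrict_Icc_railway_preimage_inter_Iio hp1.le]
  · convert hA using 2
    ext ω
    by_cases hω : P ω < pstar <;> norm_num [hω]
  · change μ.map (railway pstar ∘ P) = _
    ext t ht
    rw [Measure.map_apply (measurable_railway.comp hPm) ht, hg ht, Measure.smul_apply,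
      Measure.restrict_apply ht, smul_eq_mul]
end

section
/- Let 0 < p_l ≤ p_u < 1 and let P be uniformly distributed on [0,1]. On the event {P < p_l or P > p_u}, define h(P) = 1 if P < p_l and h(P) = -1 if P > p_u, and define the gap masking g(P) = P if P < p_l, g(P) = (p_l/(1-p_u))(1-P) if P > p_u. Then, conditionally on the event {P < p_l or P > p_u}: the probability that h(P) = 1 equals p_l/(p_l + 1 - p_u), g(P) is uniformly distributed on (0, p_l), and h(P) and g(P) are conditionally independent. -/
/-!
Conditionally on the gap event, `P` is uniform on `[0, p_l) ∪ (p_u, 1]`. On the lower piece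
the mask `g` is the identity, and on the upper piece it is the decreasing affine bijection of
`(p_u, 1]` onto `[0, p_l)`, so both pieces push the conditional law forward to the uniform law
on `(0, p_l)`. A variable whose conditional law is the same given `E` and given `Eᶜ` has that
law unconditionally and is independent of the indicator of `E`; take `E = {h(P) = 1}`.
-/

open MeasureTheory ProbabilityTheory Set
open scoped ENNReal

namespace ProbabilityTheory

variable {α β γ : Type*} [MeasurableSpace α] [MeasurableSpace β]

lemma map_cond_preimage {μ : Measure α} {f : α → β} (hf : Measurable f) {s : Set β}
    (hs : MeasurableSet s) : (μ[|f ⁻¹' s]).map f = (μ.map f)[|s] := by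
  rw [cond, Measure.map_smul, ← Measure.restrict_map hf hs, ← Measure.map_apply hf hs, cond]

lemma restrict_cond (μ : Measure α) (s : Set α) {t : Set α} (ht : MeasurableSet t) :
    (μ.restrict s)[|t] = μ[|s ∩ t] := by
  rw [cond, cond, Measure.restrict_apply ht, Measure.restrict_restrict ht, inter_comm]

lemma smul_cond (μ : Measure α) (s : Set α) {c : ℝ≥0∞} (hc₀ : c ≠ 0) (hc : c ≠ ∞) :
    (c • μ)[|s] = μ[|s] := by
  rw [cond, cond, Measure.restrict_smul, Measure.smul_apply, smul_eq_mul, smul_smul,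
    ENNReal.mul_inv (.inl hc₀) (.inl hc), mul_right_comm, ENNReal.inv_mul_cancel hc₀ hc, one_mul]

lemma cond_congr_ae {μ : Measure α} {s t : Set α} (h : s =ᵐ[μ] t) : μ[|s] = μ[|t] := by
  rw [cond, cond, measure_congr h, Measure.restrict_congr_set h]

section TwoValued

variable {ρ : Measure α} {Y : α → β} {ν : Measure β}

lemma measure_inter_preimage_of_map_cond [IsFiniteMeasure ρ] {F : Set α} (hF : MeasurableSet F)
    (hY : Measurable Y) (hFY : (ρ[|F]).map Y = ν) {t : Set β} (ht : MeasurableSet t) :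
    ρ (F ∩ Y ⁻¹' t) = ρ F * ν t := by
  rw [← cond_mul_eq_inter hF, ← Measure.map_apply hY ht, hFY, mul_comm]

variable [IsProbabilityMeasure ρ]

lemma map_eq_of_map_cond_of_map_cond_compl {E : Set α} (hE : MeasurableSet E) (hY : Measurable Y)
    (hEY : (ρ[|E]).map Y = ν) (hEcY : (ρ[|Eᶜ]).map Y = ν) : ρ.map Y = ν := by
  ext t ht
  rw [Measure.map_apply hY ht, ← inter_union_compl (Y ⁻¹' t) E,
    measure_union (disjoint_compl_right.mono inter_subset_right inter_subset_right)
      ((hY ht).inter hE.compl), inter_comm, inter_comm _ Eᶜ,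
    measure_inter_preimage_of_map_cond hE hY hEY ht,
    measure_inter_preimage_of_map_cond hE.compl hY hEcY ht, ← add_mul,
    prob_add_prob_compl hE, one_mul]

lemma indepFun_ite_of_map_cond_of_map_cond_compl {p : α → Prop} [DecidablePred p]
    (hp : MeasurableSet {x | p x}) (hY : Measurable Y) (hpY : (ρ[|{x | p x}]).map Y = ν)
    (hpcY : (ρ[|{x | p x}ᶜ]).map Y = ν) [MeasurableSpace γ] (a b : γ) :
    IndepFun (fun x => if p x then a else b) Y ρ := by
  have hY_law : ∀ t, MeasurableSet t → ρ (Y ⁻¹' t) = ν t := fun t ht => by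
    rw [← Measure.map_apply hY ht, map_eq_of_map_cond_of_map_cond_compl hp hY hpY hpcY]
  rw [indepFun_iff_measure_inter_preimage_eq_mul]
  intro s t _ ht
  by_cases ha : a ∈ s <;> by_cases hb : b ∈ s
  · have hpre : (fun x => if p x then a else b) ⁻¹' s = univ := by
      ext x; by_cases hx : p x <;> simp [hx, ha, hb]
    simp [hpre]
  · have hpre : (fun x => if p x then a else b) ⁻¹' s = {x | p x} := by
      ext x; by_cases hx : p x <;> simp [hx, ha, hb]
    rw [hpre, hY_law t ht, measure_inter_preimage_of_map_cond hp hY hpY ht]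
  · have hpre : (fun x => if p x then a else b) ⁻¹' s = {x | p x}ᶜ := by
      ext x; by_cases hx : p x <;> simp [hx, ha, hb]
    rw [hpre, hY_law t ht, measure_inter_preimage_of_map_cond hp.compl hY hpcY ht]
  · have hpre : (fun x => if p x then a else b) ⁻¹' s = ∅ := by
      ext x; by_cases hx : p x <;> simp [hx, ha, hb]
    simp [hpre]

end TwoValued

end ProbabilityTheory

noncomputable def gapMask (pl pu x : ℝ) : ℝ := if x < pl then x else pl / (1 - pu) * (1 - x)

lemma map_volume_mul_one_sub {c : ℝ} (hc : c ≠ 0) :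
    volume.map (fun x : ℝ => c * (1 - x)) = ENNReal.ofReal |c⁻¹| • volume := by
  have hcomp : (fun x : ℝ => c * (1 - x)) = (c + ·) ∘ ((-c) * ·) := by
    funext x; simp only [Function.comp]; ring
  rw [hcomp, ← Measure.map_map (by fun_prop) (by fun_prop),
    Real.map_volume_mul_left (neg_ne_zero.2 hc), Measure.map_smul,
    Measure.IsAddLeftInvariant.map_add_left_eq_self c, abs_inv, abs_neg, abs_inv]

lemma volume_cond_Ico_zero (b : ℝ) :
    volume[|Ico 0 b] = (ENNReal.ofReal b)⁻¹ • volume.restrict (Ioo 0 b) := by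
  rw [cond_congr_ae Ioo_ae_eq_Ico.symm, ProbabilityTheory.cond, Real.volume_Ioo, sub_zero]

section Gap

variable {pl pu : ℝ}

lemma Icc_zero_one_inter_Iio (h : pl ≤ 1) : Icc 0 1 ∩ Iio pl = Ico 0 pl := by
  ext x; simp only [mem_inter_iff, mem_Icc, mem_Iio, mem_Ico]
  constructor
  · rintro ⟨⟨h0, -⟩, hx⟩; exact ⟨h0, hx⟩
  · rintro ⟨h0, hx⟩; exact ⟨⟨h0, by linarith⟩, hx⟩

lemma Icc_zero_one_inter_Ioi (h : 0 ≤ pu) : Icc 0 1 ∩ Ioi pu = Ioc pu 1 := by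
  ext x; simp only [mem_inter_iff, mem_Icc, mem_Ioi, mem_Ioc]
  constructor
  · rintro ⟨⟨-, h1⟩, hx⟩; exact ⟨hx, h1⟩
  · rintro ⟨hx, h1⟩; exact ⟨⟨by linarith, h1⟩, hx⟩

lemma volume_Icc_zero_one_inter_Iio_union_Ioi (hl : 0 < pl) (hlu : pl ≤ pu) (hu : pu < 1) :
    volume (Icc 0 1 ∩ (Iio pl ∪ Ioi pu)) = ENNReal.ofReal (pl + 1 - pu) := by
  have hdisj : Disjoint (Ico 0 pl) (Ioc pu 1) :=
    Set.disjoint_left.2 fun x hx hx' => by linarith [hx.2, hx'.1]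
  rw [inter_union_distrib_left, Icc_zero_one_inter_Iio (by linarith),
    Icc_zero_one_inter_Ioi (by linarith), measure_union hdisj measurableSet_Ioc,
    Real.volume_Ico, Real.volume_Ioc, ← ENNReal.ofReal_add (by linarith) (by linarith)]
  ring_nf

lemma Iio_union_Ioi_inter_compl_Iio (h : pl ≤ pu) : (Iio pl ∪ Ioi pu) ∩ (Iio pl)ᶜ = Ioi pu := by
  ext x
  simp only [mem_inter_iff, mem_union, mem_Iio, mem_Ioi, mem_compl_iff, not_lt]
  constructor
  · rintro ⟨hx | hx, hx'⟩ <;> linarith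
  · intro hx; exact ⟨Or.inr hx, by linarith⟩

lemma preimage_mul_one_sub_Ico {c : ℝ} (hc : 0 < c) (b : ℝ) :
    (fun x : ℝ => c * (1 - x)) ⁻¹' Ico 0 (c * (1 - b)) = Ioc b 1 := by
  ext x
  simp only [mem_preimage, mem_Ico, mem_Ioc, mul_nonneg_iff_of_pos_left hc,
    mul_lt_mul_iff_right₀ hc]
  constructor <;> rintro ⟨h1, h2⟩ <;> constructor <;> linarith

lemma measurable_gapMask (pl pu : ℝ) : Measurable (gapMask pl pu) :=
  Measurable.ite measurableSet_Iio measurable_id (by fun_prop)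

lemma map_gapMask_volume_cond_Ico (pu : ℝ) :
    (volume[|Ico 0 pl]).map (gapMask pl pu) = volume[|Ico 0 pl] := by
  rw [Measure.map_congr (g := id), Measure.map_id]
  exact ae_cond_of_forall_mem measurableSet_Ico fun x hx => if_pos hx.2

lemma map_gapMask_volume_cond_Ioc (hl : 0 < pl) (hlu : pl ≤ pu) (hu : pu < 1) :
    (volume[|Ioc pu 1]).map (gapMask pl pu) = volume[|Ico 0 pl] := by
  have hc : 0 < pl / (1 - pu) := div_pos hl (by linarith)
  have hpl : pl / (1 - pu) * (1 - pu) = pl := div_mul_cancel₀ _ (by linarith)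
  rw [Measure.map_congr (g := fun x => pl / (1 - pu) * (1 - x)),
    ← preimage_mul_one_sub_Ico hc, map_cond_preimage (by fun_prop) measurableSet_Ico,
    map_volume_mul_one_sub hc.ne', smul_cond _ _ (by positivity) ENNReal.ofReal_ne_top, hpl]
  exact ae_cond_of_forall_mem measurableSet_Ioc fun x hx => if_neg (by linarith [hx.1])

variable {Ω : Type*} [MeasurableSpace Ω] {μ : Measure Ω} {P : Ω → ℝ}

lemma map_gapMask_cond_preimage (hPm : Measurable P) (hunif : μ.map P = volume.restrict (Icc 0 1))
    {T : Set ℝ} (hT : MeasurableSet T) :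
    (μ[|P ⁻¹' T]).map (gapMask pl pu ∘ P) = (volume[|Icc 0 1 ∩ T]).map (gapMask pl pu) := by
  rw [← Measure.map_map (measurable_gapMask pl pu) hPm, map_cond_preimage hPm hT, hunif,
    restrict_cond _ _ hT]

lemma measure_preimage_of_map_eq (hPm : Measurable P)
    (hunif : μ.map P = volume.restrict (Icc 0 1)) {T : Set ℝ} (hT : MeasurableSet T) :
    μ (P ⁻¹' T) = volume (Icc 0 1 ∩ T) := by
  rw [← Measure.map_apply hPm hT, hunif, Measure.restrict_apply hT, inter_comm]

lemma cond_preimage_Iio_union_Ioi_Iio (hPm : Measurable P)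
    (hunif : μ.map P = volume.restrict (Icc 0 1)) (hl : 0 < pl) (hlu : pl ≤ pu) (hu : pu < 1) :
    μ[P ⁻¹' Iio pl | P ⁻¹' (Iio pl ∪ Ioi pu)] = ENNReal.ofReal (pl / (pl + 1 - pu)) := by
  rw [cond_apply (hPm (measurableSet_Iio.union measurableSet_Ioi)), ← preimage_inter,
    inter_eq_right.2 subset_union_left,
    measure_preimage_of_map_eq hPm hunif (measurableSet_Iio.union measurableSet_Ioi),
    measure_preimage_of_map_eq hPm hunif measurableSet_Iio,
    volume_Icc_zero_one_inter_Iio_union_Ioi hl hlu hu,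
    Icc_zero_one_inter_Iio (by linarith), Real.volume_Ico, sub_zero,
    ENNReal.ofReal_div_of_pos (by linarith), div_eq_mul_inv, mul_comm]

variable [IsFiniteMeasure μ]

lemma map_gapMask_cond_Iio (hPm : Measurable P) (hunif : μ.map P = volume.restrict (Icc 0 1))
    (hl1 : pl ≤ 1) :
    (μ[|P ⁻¹' (Iio pl ∪ Ioi pu)][|P ⁻¹' Iio pl]).map (gapMask pl pu ∘ P) = volume[|Ico 0 pl] := by
  rw [cond_cond_eq_cond_inter (hPm (measurableSet_Iio.union measurableSet_Ioi))
      (hPm measurableSet_Iio), ← preimage_inter, inter_eq_right.2 subset_union_left,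
    map_gapMask_cond_preimage hPm hunif measurableSet_Iio, Icc_zero_one_inter_Iio hl1,
    map_gapMask_volume_cond_Ico]

lemma map_gapMask_cond_compl_Iio (hPm : Measurable P)
    (hunif : μ.map P = volume.restrict (Icc 0 1)) (hl : 0 < pl) (hlu : pl ≤ pu) (hu : pu < 1) :
    (μ[|P ⁻¹' (Iio pl ∪ Ioi pu)][|(P ⁻¹' Iio pl)ᶜ]).map (gapMask pl pu ∘ P) =
      volume[|Ico 0 pl] := by
  rw [cond_cond_eq_cond_inter (hPm (measurableSet_Iio.union measurableSet_Ioi))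
      (hPm measurableSet_Iio).compl, ← preimage_compl, ← preimage_inter,
    Iio_union_Ioi_inter_compl_Iio hlu, map_gapMask_cond_preimage hPm hunif measurableSet_Ioi,
    Icc_zero_one_inter_Ioi (by linarith), map_gapMask_volume_cond_Ioc hl hlu hu]

end Gap

/-- For `P` uniform on `[0,1]` and gap masking with parameters
`0 < p_l ≤ p_u < 1`, conditionally on the event `{P < p_l ∨ P > p_u}`:
`h(P) = 1` (i.e. `P < p_l`) with probability `p_l/(p_l + 1 - p_u)`,
the masked value `g(P)` is uniform on `(0, p_l)`, and `h(P)` and `g(P)` are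
conditionally independent. -/
theorem gap_masking_conditional_independent
    {Ω : Type*} [MeasurableSpace Ω] (μ : Measure Ω) [IsProbabilityMeasure μ]
    (pl pu : ℝ) (hl : 0 < pl) (hlu : pl ≤ pu) (hu : pu < 1)
    (P : Ω → ℝ) (hPm : Measurable P)
    (hunif : μ.map P = volume.restrict (Set.Icc 0 1)) :
    (μ[|{ω | P ω < pl ∨ pu < P ω}]) {ω | P ω < pl} = ENNReal.ofReal (pl / (pl + 1 - pu)) ∧
    (μ[|{ω | P ω < pl ∨ pu < P ω}]).map
        (fun ω => if P ω < pl then P ω else pl / (1 - pu) * (1 - P ω))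
      = (ENNReal.ofReal pl)⁻¹ • volume.restrict (Set.Ioo 0 pl) ∧
    IndepFun (fun ω => if P ω < pl then (1:ℝ) else -1)
        (fun ω => if P ω < pl then P ω else pl / (1 - pu) * (1 - P ω))
        (μ[|{ω | P ω < pl ∨ pu < P ω}]) := by
  change μ[P ⁻¹' Iio pl | P ⁻¹' (Iio pl ∪ Ioi pu)] = _ ∧
    (μ[|P ⁻¹' (Iio pl ∪ Ioi pu)]).map (gapMask pl pu ∘ P) = _ ∧
    IndepFun _ (gapMask pl pu ∘ P) (μ[|P ⁻¹' (Iio pl ∪ Ioi pu)])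
  have hE : MeasurableSet (P ⁻¹' Iio pl) := hPm measurableSet_Iio
  have hY : Measurable (gapMask pl pu ∘ P) := (measurable_gapMask pl pu).comp hPm
  have hlower := map_gapMask_cond_Iio hPm hunif (pu := pu) (hlu.trans hu.le)
  have hupper := map_gapMask_cond_compl_Iio hPm hunif hl hlu hu
  have : IsProbabilityMeasure (μ[|P ⁻¹' (Iio pl ∪ Ioi pu)]) := by
    refine cond_isProbabilityMeasure ?_
    rw [measure_preimage_of_map_eq hPm hunif (measurableSet_Iio.union measurableSet_Ioi),
      volume_Icc_zero_one_inter_Iio_union_Ioi hl hlu hu]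
    exact (ENNReal.ofReal_pos.2 (by linarith)).ne'
  refine ⟨cond_preimage_Iio_union_Ioi_Iio hPm hunif hl hlu hu, ?_, ?_⟩
  · rw [← volume_cond_Ico_zero]
    exact map_eq_of_map_cond_of_map_cond_compl hE hY hlower hupper
  · exact indepFun_ite_of_map_cond_of_map_cond_compl (p := fun ω => P ω < pl) hE hY
      hlower hupper 1 (-1)
end

section
/- Let p* ∈ (0,1) and let P be a random variable on [0,1] with a nondecreasing density f. With railway masking h(P) = 1{P < p*} (coded as ±1) and g(P) = P for P < p*, g(P) = (p*/(1-p*))(P - p*) for P ≥ p*, for every measurable set A ⊆ (0, p*) it holds that ℙ(P < p* and g(P) ∈ A) ≤ p* · ℙ(g(P) ∈ A); equivalently, ℙ(h(P) = 1 | g(P)) ≤ p* almost surely. -/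
/-!
On the event `g(P) ∈ A` with `A ⊆ (0, p*)`, either `P ∈ A` or `P ∈ T(A)`, where
`T y = (1 - p*)/p* · y + p*` inverts the upper branch of `g`. The map `T` stretches lengths by
`(1 - p*)/p*` and moves every point of `A` to the right, so for a nondecreasing density `f`
`ℙ(P ∈ T(A)) = (1 - p*)/p* · ∫_A f ∘ T ≥ (1 - p*)/p* · ℙ(P ∈ A)`.
Thus `(1 - p*) ℙ(P ∈ A) ≤ p* ℙ(P ∈ T(A))`, which rearranges to the claim.
-/

open MeasureTheory ProbabilityTheory Set

theorem setLIntegral_image_affine {a : ℝ} (ha : a ≠ 0) (b : ℝ) {s : Set ℝ}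
    (hs : MeasurableSet s) (g : ℝ → ENNReal) :
    ∫⁻ x in (fun y => a * y + b) '' s, g x
      = ENNReal.ofReal |a| * ∫⁻ y in s, g (a * y + b) := by
  have hinj : InjOn (fun y => a * y + b) s := fun x _ y _ h => by simpa [ha] using h
  rw [lintegral_image_eq_lintegral_abs_deriv_mul hs
      (fun y _ => ((hasDerivAt_id' y).const_mul a |>.add_const b).hasDerivWithinAt) hinj,
    ← lintegral_const_mul' _ _ ENNReal.ofReal_ne_top, mul_one]

-- `railwayMask p` is the paper's `g` and `railwayLift p` is the map `T` above.
noncomputable def railwayMask (p x : ℝ) : ℝ := if x < p then x else p / (1 - p) * (x - p)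

noncomputable def railwayLift (p y : ℝ) : ℝ := (1 - p) / p * y + p

section Railway

variable {p : ℝ} {A : Set ℝ}

theorem railwayLift_mem_Ioo (hp : p ∈ Ioo 0 1) {y : ℝ} (hy : y ∈ Ioo 0 p) :
    railwayLift p y ∈ Ioo p 1 := by
  obtain ⟨hp0, hp1⟩ := hp
  have hslope : 0 < (1 - p) / p := div_pos (sub_pos.2 hp1) hp0
  have hstretch : (1 - p) / p * y < 1 - p := by
    simpa [div_mul_cancel₀ _ hp0.ne'] using mul_lt_mul_of_pos_left hy.2 hslope
  exact ⟨lt_add_of_pos_left p (mul_pos hslope hy.1), by unfold railwayLift; linarith⟩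

theorem railwayMask_railwayLift (hp : p ∈ Ioo 0 1) {y : ℝ} (hy : 0 ≤ y) :
    railwayMask p (railwayLift p y) = y := by
  obtain ⟨hp0, hp1⟩ := hp
  have hslope : 0 < (1 - p) / p := div_pos (sub_pos.2 hp1) hp0
  have hle : p ≤ railwayLift p y := le_add_of_nonneg_left (mul_nonneg hslope.le hy)
  rw [railwayMask, if_neg hle.not_gt, railwayLift, add_sub_cancel_right, ← mul_assoc,
    div_mul_div_cancel₀' hp0.ne', div_self (sub_pos.2 hp1).ne', one_mul]

theorem railwayLift_railwayMask (hp : p ∈ Ioo 0 1) {x : ℝ} (hx : p ≤ x) :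
    railwayLift p (railwayMask p x) = x := by
  obtain ⟨hp0, hp1⟩ := hp
  rw [railwayMask, if_neg hx.not_gt, railwayLift]
  field_simp
  ring

theorem railwayMask_preimage (hp : p ∈ Ioo 0 1) (hA : A ⊆ Ioo 0 p) :
    railwayMask p ⁻¹' A = A ∪ railwayLift p '' A := by
  ext x
  simp only [mem_preimage, mem_union, mem_image]
  by_cases hx : x < p
  · rw [railwayMask, if_pos hx]
    refine ⟨Or.inl, ?_⟩
    rintro (hxA | ⟨y, hyA, rfl⟩)
    · exact hxA
    · exact absurd (railwayLift_mem_Ioo hp (hA hyA)).1 hx.not_gt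
  · constructor
    · intro hxA
      exact Or.inr ⟨_, hxA, railwayLift_railwayMask hp (not_lt.1 hx)⟩
    · rintro (hxA | ⟨y, hyA, rfl⟩)
      · exact absurd (hA hxA).2 hx
      · rwa [railwayMask_railwayLift hp (hA hyA).1.le]

theorem setOf_lt_and_railwayMask_mem (hA : A ⊆ Iio p) :
    {x | x < p ∧ railwayMask p x ∈ A} = A := by
  ext x
  simp only [mem_ofPred_eq, railwayMask]
  constructor
  · rintro ⟨hx, hxA⟩
    rwa [if_pos hx] at hxA
  · intro hxA
    have hx : x < p := hA hxA
    exact ⟨hx, by rwa [if_pos hx]⟩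

theorem disjoint_image_railwayLift (hp : p ∈ Ioo 0 1) (hA : A ⊆ Ioo 0 p) :
    Disjoint A (railwayLift p '' A) := by
  rw [disjoint_left]
  rintro x hxA ⟨y, hyA, rfl⟩
  exact (hA hxA).2.not_gt (railwayLift_mem_Ioo hp (hA hyA)).1

theorem railwayLift_injective (hp : p ∈ Ioo 0 1) : Function.Injective (railwayLift p) := by
  have hslope : (1 - p) / p ≠ 0 := (div_pos (sub_pos.2 hp.2) hp.1).ne'
  intro x y h
  simpa [railwayLift, hslope] using h

theorem measurableSet_image_railwayLift (hp : p ∈ Ioo 0 1) (hA : MeasurableSet A) :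
    MeasurableSet (railwayLift p '' A) :=
  hA.image_of_continuousOn_injOn (by unfold railwayLift; fun_prop) (railwayLift_injective hp).injOn

end Railway

theorem ofReal_one_sub_mul_withDensity_le {p : ℝ} (hp : p ∈ Ioo 0 1) {F : ℝ → ENNReal}
    (hF : MonotoneOn F (Ioo 0 1)) {A : Set ℝ} (hAm : MeasurableSet A) (hA : A ⊆ Ioo 0 p) :
    ENNReal.ofReal (1 - p) * volume.withDensity F A
      ≤ ENNReal.ofReal p * volume.withDensity F (railwayLift p '' A) := by
  obtain ⟨hp0, hp1⟩ := hp
  have hslope : 0 < (1 - p) / p := div_pos (sub_pos.2 hp1) hp0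
  have hLift : railwayLift p = fun y => (1 - p) / p * y + p := rfl
  rw [withDensity_apply' _ A, withDensity_apply', hLift, setLIntegral_image_affine hslope.ne' _ hAm,
    ← mul_assoc, ← ENNReal.ofReal_mul hp0.le, abs_of_pos hslope, mul_div_cancel₀ _ hp0.ne']
  gcongr ENNReal.ofReal (1 - p) * ?_
  refine setLIntegral_mono' hAm fun y hy => ?_
  obtain ⟨hy0, hyp⟩ := hA hy
  obtain ⟨hpl, hl1⟩ := railwayLift_mem_Ioo ⟨hp0, hp1⟩ (hA hy)
  exact hF ⟨hy0, hyp.trans hp1⟩ ⟨hp0.trans hpl, hl1⟩ (hyp.trans hpl).le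

theorem le_ofReal_mul_add_of_ofReal_one_sub_mul_le {p : ℝ} (hp0 : 0 ≤ p) (hp1 : p ≤ 1)
    {x y : ENNReal} (h : ENNReal.ofReal (1 - p) * x ≤ ENNReal.ofReal p * y) :
    x ≤ ENNReal.ofReal p * (x + y) :=
  calc x = (ENNReal.ofReal p + ENNReal.ofReal (1 - p)) * x := by
        rw [← ENNReal.ofReal_add hp0 (sub_nonneg.2 hp1), add_sub_cancel, ENNReal.ofReal_one,
          one_mul]
    _ = ENNReal.ofReal p * x + ENNReal.ofReal (1 - p) * x := add_mul _ _ _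
    _ ≤ ENNReal.ofReal p * x + ENNReal.ofReal p * y := by gcongr
    _ = ENNReal.ofReal p * (x + y) := (mul_add _ _ _).symm

theorem railway_masking_nondecreasing_density_general
    {Ω : Type*} [MeasurableSpace Ω] (μ : Measure Ω)
    (pstar : ℝ) (hp : pstar ∈ Set.Ioo (0:ℝ) 1)
    (P : Ω → ℝ) (hPm : Measurable P)
    (f : ℝ → ℝ)
    (hdens : μ.map P = volume.withDensity (fun x => ENNReal.ofReal (f x)))
    (hmono : MonotoneOn f (Set.Icc (0:ℝ) 1)) :
    ∀ A : Set ℝ, MeasurableSet A → A ⊆ Set.Ioo 0 pstar →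
      μ {ω | P ω < pstar ∧
            (if P ω < pstar then P ω else pstar / (1 - pstar) * (P ω - pstar)) ∈ A}
        ≤ ENNReal.ofReal pstar *
          μ {ω | (if P ω < pstar then P ω else pstar / (1 - pstar) * (P ω - pstar)) ∈ A} := by
  intro A hA hAsub
  have hlaw : ∀ S, MeasurableSet S →
      μ (P ⁻¹' S) = volume.withDensity (fun x => ENNReal.ofReal (f x)) S := fun S hS => by
    rw [← Measure.map_apply hPm hS, hdens]
  have hLiftA := measurableSet_image_railwayLift hp hA
  change μ (P ⁻¹' {x | x < pstar ∧ railwayMask pstar x ∈ A})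
    ≤ ENNReal.ofReal pstar * μ (P ⁻¹' (railwayMask pstar ⁻¹' A))
  rw [setOf_lt_and_railwayMask_mem (hAsub.trans Ioo_subset_Iio_self),
    railwayMask_preimage hp hAsub, hlaw _ hA, hlaw _ (hA.union hLiftA),
    measure_union (disjoint_image_railwayLift hp hAsub) hLiftA]
  exact le_ofReal_mul_add_of_ofReal_one_sub_mul_le hp.1.le hp.2.le <|
    ofReal_one_sub_mul_withDensity_le hp
      (ENNReal.ofReal_mono.comp_monotoneOn (hmono.mono Ioo_subset_Icc_self)) hA hAsub

/-- If `P` has a nondecreasing density `f` on `[0,1]`, then under railway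
masking `h(P) = 1{P < p*}`, `g(P) = P` for `P < p*` and `g(P) = p*/(1-p*)·(P - p*)`
for `P ≥ p*`, for every measurable `A ⊆ (0, p*)` we have
`ℙ(P < p* ∧ g(P) ∈ A) ≤ p* · ℙ(g(P) ∈ A)`, i.e. `ℙ(h(P) = 1 | g(P)) ≤ p*` a.s. -/
theorem railway_masking_nondecreasing_density
    {Ω : Type*} [MeasurableSpace Ω] (μ : Measure Ω) [IsProbabilityMeasure μ]
    (pstar : ℝ) (hp : pstar ∈ Set.Ioo (0:ℝ) 1)
    (P : Ω → ℝ) (hPm : Measurable P)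
    (f : ℝ → ℝ) (hfm : Measurable f) (hf0 : ∀ x, 0 ≤ f x)
    (hsupp : ∀ x ∉ Set.Icc (0:ℝ) 1, f x = 0)
    (hdens : μ.map P = volume.withDensity (fun x => ENNReal.ofReal (f x)))
    (hmono : MonotoneOn f (Set.Icc (0:ℝ) 1)) :
    ∀ A : Set ℝ, MeasurableSet A → A ⊆ Set.Ioo 0 pstar →
      μ {ω | P ω < pstar ∧
            (if P ω < pstar then P ω else pstar / (1 - pstar) * (P ω - pstar)) ∈ A}
        ≤ ENNReal.ofReal pstar *
          μ {ω | (if P ω < pstar then P ω else pstar / (1 - pstar) * (P ω - pstar)) ∈ A} :=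
  railway_masking_nondecreasing_density_general μ pstar hp P hPm f hdens hmono
end

section
/- Let 0 < p_l ≤ p_u < 1, set p̃ = p_l/(p_l + 1 - p_u), and let P be a random variable on [0,1] with a nondecreasing density f. With gap masking (h(P) = 1 if P < p_l, h(P) = -1 if P > p_u; g(P) = P for P < p_l, g(P) = (p_l/(1-p_u))(1-P) for P > p_u), for every measurable set A ⊆ (0, p_l) it holds that ℙ(P < p_l and g(P) ∈ A) ≤ p̃ · ℙ((P < p_l or P > p_u) and g(P) ∈ A). -/
open MeasureTheory Set

/-!
On `(pu, 1]` the masked value is the decreasing affine map `x ↦ c (1 - x)` with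
`c = pl / (1 - pu)`, so the event `P > pu, g(P) ∈ A` is `P ∈ T(A)` for the inverse map
`T y = 1 - y / c`. Since `T` stretches lengths by `1 / c` and moves every point of
`A ⊆ (0, pl)` to the right of `pu ≥ pl`, a nondecreasing density gives
`ℙ(P ∈ T(A)) ≥ ℙ(P ∈ A) / c`, and `p̃ (1 + 1 / c) = 1` turns this into the claim.
-/

section AffineImage

variable {F : ℝ → ENNReal} {A : Set ℝ} {a : ℝ}

theorem withDensity_image_affine (hA : MeasurableSet A) (ha : a ≠ 0) (b : ℝ) :
    volume.withDensity F ((fun y => a * y + b) '' A)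
      = ENNReal.ofReal |a| * ∫⁻ y in A, F (a * y + b) := by
  have hderiv : ∀ y ∈ A, HasDerivWithinAt (fun y => a * y + b) a A y := fun y _ =>
    (((hasDerivAt_id y).const_mul a).add_const b).hasDerivWithinAt.congr_deriv (mul_one a)
  have hinj : InjOn (fun y => a * y + b) A := fun y _ z _ h =>
    mul_left_cancel₀ ha (add_right_cancel h)
  rw [withDensity_apply', lintegral_image_eq_lintegral_abs_deriv_mul hA hderiv hinj,
    lintegral_const_mul' _ _ ENNReal.ofReal_ne_top]

theorem ofReal_abs_mul_withDensity_le_image (hA : MeasurableSet A) (ha : a ≠ 0) (b : ℝ)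
    (hF : ∀ y ∈ A, F y ≤ F (a * y + b)) :
    ENNReal.ofReal |a| * volume.withDensity F A
      ≤ volume.withDensity F ((fun y => a * y + b) '' A) := by
  rw [withDensity_image_affine hA ha, withDensity_apply' F A]
  gcongr _ * ?_
  exact setLIntegral_mono' hA hF

end AffineImage

theorem ENNReal.le_mul_add_of_mul_le {p k x y : ENNReal} (hpk : p * (1 + k) = 1)
    (hxy : k * x ≤ y) : x ≤ p * (x + y) :=
  calc x = p * (1 + k) * x := by rw [hpk, one_mul]
    _ = p * (x + k * x) := by ring
    _ ≤ p * (x + y) := by gcongr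

/-- The masked value `g` of gap masking. -/
noncomputable def gapMaskedValue (pl pu x : ℝ) : ℝ :=
  if x < pl then x else pl / (1 - pu) * (1 - x)

section GapMasking

variable {pl pu : ℝ} {A : Set ℝ}

theorem measurable_gapMaskedValue : Measurable (gapMaskedValue pl pu) :=
  Measurable.ite (p := (· < pl)) measurableSet_Iio measurable_id (by fun_prop)

theorem setOf_lt_and_gapMaskedValue_mem (hA : A ⊆ Iio pl) :
    {x | x < pl ∧ gapMaskedValue pl pu x ∈ A} = A := by
  ext x
  refine ⟨fun ⟨hx, hgx⟩ => ?_, fun hx => ⟨hA hx, ?_⟩⟩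
  · rwa [gapMaskedValue, if_pos hx] at hgx
  · rwa [gapMaskedValue, if_pos (show x < pl from hA hx)]

theorem setOf_gt_and_gapMaskedValue_mem (hl : 0 < pl) (hlu : pl ≤ pu) (hu : pu < 1)
    (hA : A ⊆ Iio pl) :
    {x | pu < x ∧ gapMaskedValue pl pu x ∈ A} = (fun y => -((1 - pu) / pl) * y + 1) '' A := by
  have hup : 0 < 1 - pu := by linarith
  ext x
  simp only [mem_ofPred_eq, mem_image]
  constructor
  · rintro ⟨hx, hgx⟩
    rw [gapMaskedValue, if_neg (by linarith)] at hgx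
    refine ⟨_, hgx, ?_⟩
    field_simp
    ring
  · rintro ⟨y, hy, rfl⟩
    have hy' : (1 - pu) / pl * y < 1 - pu := by
      have : y < pl := hA hy
      rw [div_mul_eq_mul_div, div_lt_iff₀ hl]
      nlinarith
    refine ⟨by linarith, ?_⟩
    rw [gapMaskedValue, if_neg (by linarith)]
    convert hy using 1
    field_simp
    ring

theorem measure_setOf_or_and_gapMaskedValue_mem (ν : Measure ℝ) (hl : 0 < pl)
    (hlu : pl ≤ pu) (hu : pu < 1) (hAm : MeasurableSet A) (hA : A ⊆ Iio pl) :
    ν {x | (x < pl ∨ pu < x) ∧ gapMaskedValue pl pu x ∈ A}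
      = ν A + ν ((fun y => -((1 - pu) / pl) * y + 1) '' A) := by
  have hdisj : Disjoint {x | x < pl ∧ gapMaskedValue pl pu x ∈ A}
      {x | pu < x ∧ gapMaskedValue pl pu x ∈ A} :=
    disjoint_left.2 fun x hx hx' => (hx.1.trans_le hlu).not_gt hx'.1
  have hunion : {x | (x < pl ∨ pu < x) ∧ gapMaskedValue pl pu x ∈ A}
      = {x | x < pl ∧ gapMaskedValue pl pu x ∈ A} ∪
        {x | pu < x ∧ gapMaskedValue pl pu x ∈ A} := by
    ext x
    simp only [mem_ofPred_eq, mem_union, or_and_right]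
  rw [hunion, measure_union' hdisj (by rwa [setOf_lt_and_gapMaskedValue_mem hA]),
    setOf_lt_and_gapMaskedValue_mem hA, setOf_gt_and_gapMaskedValue_mem hl hlu hu hA]

theorem ofReal_div_mul_one_add_ofReal_abs_neg_div (hl : 0 < pl) (hu : pu < 1) :
    ENNReal.ofReal (pl / (pl + 1 - pu)) * (1 + ENNReal.ofReal |-((1 - pu) / pl)|) = 1 := by
  have hup : 0 < 1 - pu := by linarith
  have hden : 0 < pl + 1 - pu := by linarith
  rw [abs_neg, abs_of_pos (by positivity), ← ENNReal.ofReal_one,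
    ← ENNReal.ofReal_add zero_le_one (by positivity), ← ENNReal.ofReal_mul (by positivity)]
  congr 1
  field_simp
  ring

end GapMasking

theorem gap_masking_nondecreasing_density_general
    {Ω : Type*} [MeasurableSpace Ω] (μ : Measure Ω)
    (pl pu : ℝ) (hl : 0 < pl) (hlu : pl ≤ pu) (hu : pu < 1)
    (P : Ω → ℝ) (hPm : Measurable P)
    (f : ℝ → ℝ)
    (hdens : μ.map P = volume.withDensity (fun x => ENNReal.ofReal (f x)))
    (hmono : MonotoneOn f (Set.Icc (0:ℝ) 1)) :
    ∀ A : Set ℝ, MeasurableSet A → A ⊆ Set.Ioo 0 pl →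
      μ {ω | P ω < pl ∧ (if P ω < pl then P ω else pl / (1 - pu) * (1 - P ω)) ∈ A}
        ≤ ENNReal.ofReal (pl / (pl + 1 - pu)) *
          μ {ω | (P ω < pl ∨ pu < P ω) ∧
                 (if P ω < pl then P ω else pl / (1 - pu) * (1 - P ω)) ∈ A} := by
  intro A hAm hA
  have hAlt : A ⊆ Iio pl := fun y hy => (hA hy).2
  change μ (P ⁻¹' {x | x < pl ∧ gapMaskedValue pl pu x ∈ A}) ≤ _ *
    μ (P ⁻¹' {x | (x < pl ∨ pu < x) ∧ gapMaskedValue pl pu x ∈ A})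
  have hg := measurable_gapMaskedValue (pl := pl) (pu := pu) hAm
  have hlower : MeasurableSet {x | x < pl ∧ gapMaskedValue pl pu x ∈ A} :=
    measurableSet_Iio.inter hg
  have hboth : MeasurableSet {x | (x < pl ∨ pu < x) ∧ gapMaskedValue pl pu x ∈ A} :=
    (measurableSet_Iio.union measurableSet_Ioi).inter hg
  rw [← Measure.map_apply hPm hlower, ← Measure.map_apply hPm hboth,
    setOf_lt_and_gapMaskedValue_mem hAlt,
    measure_setOf_or_and_gapMaskedValue_mem _ hl hlu hu hAm hAlt, hdens]
  have hslope : -((1 - pu) / pl) ≠ 0 := neg_ne_zero.2 (div_pos (sub_pos.2 hu) hl).ne'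
  refine ENNReal.le_mul_add_of_mul_le (ofReal_div_mul_one_add_ofReal_abs_neg_div hl hu)
    (ofReal_abs_mul_withDensity_le_image hAm hslope 1 fun y hy => ?_)
  obtain ⟨hy0, hypl⟩ := hA hy
  have hTy_gt : pu < -((1 - pu) / pl) * y + 1 :=
    ((setOf_gt_and_gapMaskedValue_mem hl hlu hu hAlt).ge (mem_image_of_mem _ hy)).1
  have hTy_le : -((1 - pu) / pl) * y + 1 ≤ 1 := by
    have := mul_pos (div_pos (sub_pos.2 hu) hl) hy0
    linarith
  exact ENNReal.ofReal_le_ofReal <|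
    hmono ⟨hy0.le, by linarith⟩ ⟨by linarith, hTy_le⟩ (by linarith)

/-- If `P` has a nondecreasing density `f` on `[0,1]`, then under gap
masking with parameters `0 < p_l ≤ p_u < 1` (`g(P) = P` for `P < p_l`,
`g(P) = p_l/(1-p_u)·(1-P)` for `P > p_u`), for every measurable `A ⊆ (0, p_l)`,
`ℙ(P < p_l ∧ g(P) ∈ A) ≤ p̃ · ℙ((P < p_l ∨ P > p_u) ∧ g(P) ∈ A)` where
`p̃ = p_l/(p_l + 1 - p_u)`. -/
theorem gap_masking_nondecreasing_density
    {Ω : Type*} [MeasurableSpace Ω] (μ : Measure Ω) [IsProbabilityMeasure μ]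
    (pl pu : ℝ) (hl : 0 < pl) (hlu : pl ≤ pu) (hu : pu < 1)
    (P : Ω → ℝ) (hPm : Measurable P)
    (f : ℝ → ℝ) (hfm : Measurable f) (hf0 : ∀ x, 0 ≤ f x)
    (hsupp : ∀ x ∉ Set.Icc (0:ℝ) 1, f x = 0)
    (hdens : μ.map P = volume.withDensity (fun x => ENNReal.ofReal (f x)))
    (hmono : MonotoneOn f (Set.Icc (0:ℝ) 1)) :
    ∀ A : Set ℝ, MeasurableSet A → A ⊆ Set.Ioo 0 pl →
      μ {ω | P ω < pl ∧ (if P ω < pl then P ω else pl / (1 - pu) * (1 - P ω)) ∈ A}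
        ≤ ENNReal.ofReal (pl / (pl + 1 - pu)) *
          μ {ω | (P ω < pl ∨ pu < P ω) ∧
                 (if P ω < pl then P ω else pl / (1 - pu) * (1 - P ω)) ∈ A} :=
  gap_masking_nondecreasing_density_general μ pl pu hl hlu hu P hPm f hdens hmono
end

section
/- Let P_1, ..., P_n be i.i.d. uniform random variables on [0,1], let p* ∈ (0,1), and apply tent masking to each: h(P_i) = 2·1{P_i < p*} - 1 and g(P_i) = min{P_i, (p*/(1-p*))(1-P_i)}. Let (π_n, π_{n-1}, ..., π_1) be a random ordering (permutation) of {1,...,n} such that for every j, the index π_j is measurable with respect to the σ-field σ(g(P_1), ..., g(P_n), P_{π_n}, P_{π_{n-1}}, ..., P_{π_{j+1}}) (i.e., each next choice uses only the masked p-values and the fully revealed p-values of previously chosen indices). Then the random variables 1{h(P_{π_1}) = 1}, ..., 1{h(P_{π_n}) = 1} are mutually independent, each Bernoulli with parameter p*. -/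
/-!
The sign `1{P < p*}` of a uniform p-value is independent of its tent mask `g(P)`: below `p*` the
mask is the identity, and on `[p*, 1]` it is an affine bijection onto `[0, p*]`, so given either
value of the sign the mask is uniform on `[0, p*]`. By independence of the `P_i`, the sign of `P_i`
is then Bernoulli(p*) and independent of all masked values and of all other p-values.

On the event that the indices chosen after step `j` form a fixed tuple `σ`, everything seen at
step `j` is a function of the masked values and of the `P_{σ k}`; by downward induction on `j`,
so is the event itself. Since `π_j` lies outside the range of `σ`, the sign of `P_{π_j}` has
conditional probability `p*` given anything seen at step `j`, which includes the signs revealed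
at all later steps. Peeling off the step chosen last, one at a time, gives the product formula.
-/

open MeasureTheory ProbabilityTheory Set

local notation "σ(" f ")" => MeasurableSpace.comap f inferInstance

section

variable {Ω α γ δ : Type*} [MeasurableSpace Ω] [MeasurableSpace α] [MeasurableSpace γ]
  [MeasurableSpace δ]

lemma measure_preimage_inter_eq_mul_of_indepFun {μ : Measure Ω} [IsFiniteMeasure μ]
    {X : Ω → α} {Z : Ω → γ} (hX : Measurable X) (hZ : Measurable Z) (hXZ : IndepFun X Z μ)
    {f : α → δ} (hf : Measurable f) {S : Set α} (hS : MeasurableSet S) {c : ENNReal}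
    (hSf : ∀ T, MeasurableSet T → μ.map X (S ∩ f ⁻¹' T) = c * μ.map X (f ⁻¹' T))
    {M : Set (δ × γ)} (hM : MeasurableSet M) :
    μ (X ⁻¹' S ∩ (fun ω => (f (X ω), Z ω)) ⁻¹' M) =
      c * μ ((fun ω => (f (X ω), Z ω)) ⁻¹' M) := by
  have hN : MeasurableSet (Prod.map f id ⁻¹' M) := (hf.prodMap measurable_id) hM
  have hSN : MeasurableSet (Prod.fst ⁻¹' S ∩ Prod.map f id ⁻¹' M) :=
    (measurable_fst hS).inter hN
  have hlaw := (indepFun_iff_map_prod_eq_prod_map_map hX.aemeasurable hZ.aemeasurable).1 hXZ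
  have hXZm : Measurable fun ω => (X ω, Z ω) := hX.prodMk hZ
  calc μ (X ⁻¹' S ∩ (fun ω => (f (X ω), Z ω)) ⁻¹' M)
      = μ.map (fun ω => (X ω, Z ω)) (Prod.fst ⁻¹' S ∩ Prod.map f id ⁻¹' M) := by
        rw [Measure.map_apply hXZm hSN]; rfl
    _ = ∫⁻ z, μ.map X (S ∩ f ⁻¹' ((fun y => (y, z)) ⁻¹' M)) ∂μ.map Z := by
        rw [hlaw, Measure.prod_apply_symm hSN]; rfl
    _ = ∫⁻ z, c * μ.map X ((fun y => (y, z)) ⁻¹' (Prod.map f id ⁻¹' M)) ∂μ.map Z := by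
        congr with z
        exact hSf _ (measurable_prodMk_right hM)
    _ = c * μ ((fun ω => (f (X ω), Z ω)) ⁻¹' M) := by
        rw [lintegral_const_mul _ (measurable_measure_prodMk_right hN),
          ← Measure.prod_apply_symm hN, ← hlaw, Measure.map_apply hXZm hN]; rfl

lemma measure_eq_sum_preimage_singleton_inter {β : Type*} [Fintype β] [MeasurableSpace β]
    [MeasurableSingletonClass β] (μ : Measure Ω) {f : Ω → β} (hf : Measurable f) (T : Set Ω) :
    μ T = ∑ b, μ (f ⁻¹' {b} ∩ T) := by
  simpa [Measure.restrict_apply (hf (measurableSet_singleton _))] using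
    (sum_measure_preimage_singleton (μ := μ.restrict T) Finset.univ
      fun b _ => hf (measurableSet_singleton b)).symm

end

namespace AdaptiveOrdering

variable {Ω α β : Type*}

def viewAlong {ι κ : Type*} (Y : Ω → β) (X : ι → Ω → α) (σ : κ → ι) : Ω → β × (κ → α) :=
  fun ω => (Y ω, fun k => X (σ k) ω)

lemma measurable_viewAlong [MeasurableSpace Ω] [MeasurableSpace α] [MeasurableSpace β]
    {ι κ : Type*} {Y : Ω → β} {X : ι → Ω → α} (hY : Measurable Y)
    (hX : ∀ i, Measurable (X i)) (σ : κ → ι) : Measurable (viewAlong Y X σ) :=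
  hY.prodMk (measurable_pi_lambda _ fun k => hX (σ k))

lemma comap_viewAlong_comp_le [MeasurableSpace α] [MeasurableSpace β] {ι κ κ' : Type*}
    (Y : Ω → β) (X : ι → Ω → α) (σ : κ → ι) (τ : κ' → κ) :
    σ(viewAlong Y X (σ ∘ τ)) ≤ σ(viewAlong Y X σ) := by
  change σ(Prod.map id (· ∘ τ) ∘ viewAlong Y X σ) ≤ _
  rw [← MeasurableSpace.comap_comp]
  exact MeasurableSpace.comap_mono (Measurable.comap_le (by fun_prop))

variable {n : ℕ}

/-- The information available when `π j` is chosen; the ordering is chosen from the top index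
down. -/
def view (Y : Ω → β) (X : Fin n → Ω → α) (π : Fin n → Ω → Fin n) (j : Fin n) :
    Ω → β × ({k : Fin n // j < k} → α) :=
  fun ω => (Y ω, fun k => X (π k ω) ω)

def pattern (π : Fin n → Ω → Fin n) (j : Fin n) (σ : {k : Fin n // j < k} → Fin n) : Set Ω :=
  {ω | ∀ k : {k : Fin n // j < k}, π k ω = σ k}

variable {Y : Ω → β} {X : Fin n → Ω → α} {π : Fin n → Ω → Fin n}

lemma view_eq_viewAlong {j : Fin n} {σ : {k : Fin n // j < k} → Fin n} {ω : Ω}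
    (hω : ω ∈ pattern π j σ) : view Y X π j ω = viewAlong Y X σ ω := by
  simp only [view, viewAlong, show ∀ k : {k : Fin n // j < k}, π k ω = σ k from hω]

variable [MeasurableSpace α] [MeasurableSpace β]

lemma measurableSet_inter_pattern {j : Fin n} {σ : {k : Fin n // j < k} → Fin n}
    (hσ : MeasurableSet[σ(viewAlong Y X σ)] (pattern π j σ))
    {A : Set Ω} (hA : MeasurableSet[σ(view Y X π j)] A) :
    MeasurableSet[σ(viewAlong Y X σ)] (A ∩ pattern π j σ) := by
  obtain ⟨D, hD, rfl⟩ := hA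
  have hview : view Y X π j ⁻¹' D ∩ pattern π j σ =
      viewAlong Y X σ ⁻¹' D ∩ pattern π j σ := by
    ext ω
    refine and_congr_left fun hω => ?_
    rw [mem_preimage, mem_preimage, view_eq_viewAlong hω]
  have hD' : MeasurableSet[σ(viewAlong Y X σ)] (viewAlong Y X σ ⁻¹' D) := ⟨D, hD, rfl⟩
  rw [hview]
  exact hD'.inter hσ

lemma measurableSet_pattern (hπ : ∀ j, Measurable[σ(view Y X π j)] (π j))
    (j : Fin n) (σ : {k : Fin n // j < k} → Fin n) :
    MeasurableSet[σ(viewAlong Y X σ)] (pattern π j σ) := by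
  induction j using WellFoundedGT.induction with
  | ind j ih =>
    let shift (k : {k : Fin n // j < k}) (l : {l : Fin n // k.1 < l}) : {l : Fin n // j < l} :=
      ⟨l.1, k.2.trans l.2⟩
    have hdecomp : pattern π j σ = ⋂ k, (π k.1 ⁻¹' {σ k} ∩ pattern π k.1 (σ ∘ shift k)) :=
      ext fun ω => ⟨fun h => mem_iInter.2 fun k => ⟨h k, fun l => h (shift k l)⟩,
        fun h k => (mem_iInter.1 h k).1⟩
    rw [hdecomp]
    refine MeasurableSet.iInter fun k => comap_viewAlong_comp_le Y X σ (shift k) _ ?_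
    exact measurableSet_inter_pattern (ih k.1 k.2 _) (hπ k.1 (measurableSet_singleton _))

lemma measurableSet_selected_of_lt {S : Set α} (hS : MeasurableSet S) {j k : Fin n}
    (hjk : j < k) : MeasurableSet[σ(view Y X π j)] {ω | X (π k ω) ω ∈ S} :=
  ⟨{q | q.2 ⟨k, hjk⟩ ∈ S}, ((measurable_pi_apply _).comp measurable_snd) hS, rfl⟩

variable [MeasurableSpace Ω]

lemma comap_view_le (hY : Measurable Y) (hX : ∀ i, Measurable (X i))
    (hπ : ∀ j, Measurable[σ(view Y X π j)] (π j)) (j : Fin n) :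
    σ(view Y X π j) ≤ ‹MeasurableSpace Ω› := by
  intro A hA
  have hcover : A = ⋃ σ, A ∩ pattern π j σ := by
    rw [← inter_iUnion, eq_comm, inter_eq_left]
    exact fun ω _ => mem_iUnion.2 ⟨fun k => π k ω, fun k => rfl⟩
  rw [hcover]
  exact MeasurableSet.iUnion fun σ => (measurable_viewAlong hY hX σ).comap_le _
    (measurableSet_inter_pattern (measurableSet_pattern hπ j σ) hA)

lemma measurable_ordering (hY : Measurable Y) (hX : ∀ i, Measurable (X i))
    (hπ : ∀ j, Measurable[σ(view Y X π j)] (π j)) (j : Fin n) : Measurable (π j) :=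
  (hπ j).mono (comap_view_le hY hX hπ j) le_rfl

variable {μ : Measure Ω} {S : Set α} {c : ENNReal}

lemma measure_selected_inter_eq_mul (hY : Measurable Y) (hX : ∀ i, Measurable (X i))
    (hinj : ∀ ω, Function.Injective fun j => π j ω)
    (hπ : ∀ j, Measurable[σ(view Y X π j)] (π j))
    (hS : ∀ i A, MeasurableSet[σ(viewAlong Y X (Subtype.val : {m : Fin n // m ≠ i} → Fin n))] A →
      μ (X i ⁻¹' S ∩ A) = c * μ A)
    (j : Fin n) {B : Set Ω} (hB : MeasurableSet[σ(view Y X π j)] B) :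
    μ ({ω | X (π j ω) ω ∈ S} ∩ B) = c * μ B := by
  let cell (ω : Ω) : Fin n × ({k : Fin n // j < k} → Fin n) := (π j ω, fun k => π k ω)
  have hcell : Measurable cell := (measurable_ordering hY hX hπ j).prodMk
    (measurable_pi_lambda _ fun k => measurable_ordering hY hX hπ k)
  rw [measure_eq_sum_preimage_singleton_inter μ hcell,
    measure_eq_sum_preimage_singleton_inter μ hcell B, Finset.mul_sum]
  refine Finset.sum_congr rfl fun ⟨i, σ⟩ _ => ?_
  have hcell_eq : cell ⁻¹' {(i, σ)} = π j ⁻¹' {i} ∩ pattern π j σ := by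
    ext ω; simp [cell, pattern, funext_iff]
  by_cases hσ : ∀ k, σ k ≠ i
  · have hpiece : MeasurableSet[σ(viewAlong Y X σ)] (cell ⁻¹' {(i, σ)} ∩ B) := by
      rw [hcell_eq, inter_comm, ← inter_assoc]
      exact measurableSet_inter_pattern (measurableSet_pattern hπ j σ)
        (hB.inter (hπ j (measurableSet_singleton i)))
    have hsel : cell ⁻¹' {(i, σ)} ∩ ({ω | X (π j ω) ω ∈ S} ∩ B) =
        X i ⁻¹' S ∩ (cell ⁻¹' {(i, σ)} ∩ B) := by
      rw [hcell_eq]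
      ext ω
      simp only [mem_inter_iff, mem_preimage, mem_singleton_iff]
      grind
    rw [hsel, hS i _ (comap_viewAlong_comp_le Y X Subtype.val (fun k => ⟨σ k, hσ k⟩) _ hpiece)]
  · push Not at hσ
    obtain ⟨k, hk⟩ := hσ
    have hempty : cell ⁻¹' {(i, σ)} = ∅ := by
      rw [hcell_eq, eq_empty_iff_forall_notMem]
      rintro ω ⟨hj, hp⟩
      exact k.2.ne (hinj ω ((hp k).trans (hk.trans hj.symm))).symm
    simp [hempty]

lemma iIndepSet_selected [IsProbabilityMeasure μ] (hY : Measurable Y)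
    (hX : ∀ i, Measurable (X i)) (hSm : MeasurableSet S)
    (hinj : ∀ ω, Function.Injective fun j => π j ω)
    (hπ : ∀ j, Measurable[σ(view Y X π j)] (π j))
    (hS : ∀ i A, MeasurableSet[σ(viewAlong Y X (Subtype.val : {m : Fin n // m ≠ i} → Fin n))] A →
      μ (X i ⁻¹' S ∩ A) = c * μ A) :
    iIndepSet (fun j => {ω | X (π j ω) ω ∈ S}) μ ∧ ∀ j, μ {ω | X (π j ω) ω ∈ S} = c := by
  have hsel := measure_selected_inter_eq_mul hY hX hinj hπ hS
  have hmarg : ∀ j, μ {ω | X (π j ω) ω ∈ S} = c := fun j => by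
    simpa using hsel j MeasurableSet.univ
  have hXm : Measurable fun q : Fin n × Ω => X q.1 q.2 := measurable_from_prod_countable_right hX
  have hsel_meas : ∀ j, MeasurableSet {ω | X (π j ω) ω ∈ S} := fun j =>
    (hXm.comp ((measurable_ordering hY hX hπ j).prodMk measurable_id)) hSm
  refine ⟨(iIndepSet_iff_meas_biInter hsel_meas).2 fun s => ?_, hmarg⟩
  induction s using Finset.induction_on_min with
  | empty => simp
  | insert a s ha ih =>
    rw [Finset.set_biInter_insert, hsel a (Finset.measurableSet_biInter s fun k hk =>
        measurableSet_selected_of_lt hSm (ha k hk)), ih,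
      Finset.prod_insert fun h => (ha a h).false, hmarg]

end AdaptiveOrdering

namespace TentMasking

noncomputable def tent (p x : ℝ) : ℝ := min x (p / (1 - p) * (1 - x))

variable {p : ℝ}

lemma tent_of_lt (hp1 : p < 1) {x : ℝ} (hx : x < p) : tent p x = x := by
  refine min_eq_left ?_
  rw [div_mul_eq_mul_div, le_div_iff₀ (sub_pos.2 hp1)]
  nlinarith

lemma tent_of_le (hp1 : p < 1) {x : ℝ} (hx : p ≤ x) : tent p x = p / (1 - p) - p / (1 - p) * x := by
  refine (min_eq_right ?_).trans (mul_one_sub _ _)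
  rw [div_mul_eq_mul_div, div_le_iff₀ (sub_pos.2 hp1)]
  nlinarith

@[fun_prop]
lemma measurable_tent : Measurable (tent p) := by
  unfold tent; fun_prop

lemma volume_preimage_const_sub_mul {c : ℝ} (hc : 0 < c) {T : Set ℝ} (hT : MeasurableSet T) :
    volume ((fun x => c - c * x) ⁻¹' T) = ENNReal.ofReal c⁻¹ * volume T := by
  change volume ((fun x => c * x) ⁻¹' ((fun y => c - y) ⁻¹' T)) = _
  rw [Real.volume_preimage_mul_left hc.ne',
    (Measure.measurePreserving_sub_left volume c).measure_preimage hT.nullMeasurableSet,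
    abs_of_pos (inv_pos.2 hc)]

lemma Iio_inter_tent_preimage_inter_Icc (hp1 : p < 1) (T : Set ℝ) :
    Iio p ∩ tent p ⁻¹' T ∩ Icc 0 1 = Ico 0 p ∩ T := by
  ext x
  simp only [mem_inter_iff, mem_Iio, mem_preimage, mem_Icc, mem_Ico]
  constructor
  · rintro ⟨⟨hx, hxT⟩, hx0, -⟩
    exact ⟨⟨hx0, hx⟩, tent_of_lt hp1 hx ▸ hxT⟩
  · rintro ⟨⟨hx0, hx⟩, hxT⟩
    exact ⟨⟨hx, (tent_of_lt hp1 hx).symm ▸ hxT⟩, hx0, by linarith⟩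

lemma tent_preimage_inter_Icc (hp0 : 0 < p) (hp1 : p < 1) (T : Set ℝ) :
    tent p ⁻¹' T ∩ Icc 0 1 =
      (Ico 0 p ∩ T) ∪ (fun x => p / (1 - p) - p / (1 - p) * x) ⁻¹' (Icc 0 p ∩ T) := by
  have hc : 0 < p / (1 - p) := div_pos hp0 (sub_pos.2 hp1)
  have hcp : p / (1 - p) * (1 - p) = p := div_mul_cancel₀ _ (sub_pos.2 hp1).ne'
  ext x
  simp only [mem_inter_iff, mem_preimage, mem_Icc, mem_Ico, mem_union]
  rcases lt_or_ge x p with hx | hx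
  · rw [tent_of_lt hp1 hx]
    constructor
    · rintro ⟨hxT, hx0, -⟩
      exact Or.inl ⟨⟨hx0, hx⟩, hxT⟩
    · rintro (⟨⟨hx0, -⟩, hxT⟩ | ⟨⟨-, hle⟩, -⟩)
      · exact ⟨hxT, hx0, by linarith⟩
      · nlinarith
  · rw [tent_of_le hp1 hx]
    constructor
    · rintro ⟨hxT, -, hx1⟩
      exact Or.inr ⟨⟨by nlinarith, by nlinarith⟩, hxT⟩
    · rintro (⟨⟨-, hlt⟩, -⟩ | ⟨⟨h0, -⟩, hxT⟩)
      · linarith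
      · exact ⟨hxT, by linarith, by nlinarith⟩

lemma volume_restrict_Icc_Iio_inter_tent_preimage (hp0 : 0 < p) (hp1 : p < 1) {T : Set ℝ}
    (hT : MeasurableSet T) :
    volume.restrict (Icc 0 1) (Iio p ∩ tent p ⁻¹' T) =
      ENNReal.ofReal p * volume.restrict (Icc 0 1) (tent p ⁻¹' T) := by
  set c := p / (1 - p)
  have hc : 0 < c := div_pos hp0 (sub_pos.2 hp1)
  have hcp : c * (1 - p) = p := div_mul_cancel₀ _ (sub_pos.2 hp1).ne'
  have hdisj : Disjoint (Ico 0 p ∩ T) ((fun x => c - c * x) ⁻¹' (Icc 0 p ∩ T)) := by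
    refine disjoint_left.2 fun x ⟨⟨_, hx⟩, _⟩ ⟨⟨_, hle⟩, _⟩ => ?_
    nlinarith
  have hIcc : volume (Icc 0 p ∩ T) = volume (Ico 0 p ∩ T) :=
    measure_congr (Ico_ae_eq_Icc.symm.inter (ae_eq_refl T))
  have hweights : ENNReal.ofReal p * ENNReal.ofReal c⁻¹ = ENNReal.ofReal (1 - p) := by
    rw [← ENNReal.ofReal_mul hp0.le, inv_div, mul_div_cancel₀ _ hp0.ne']
  have hT' : MeasurableSet (tent p ⁻¹' T) := measurable_tent hT
  rw [Measure.restrict_apply (measurableSet_Iio.inter hT'), Measure.restrict_apply hT',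
    Iio_inter_tent_preimage_inter_Icc hp1, tent_preimage_inter_Icc hp0 hp1,
    measure_union hdisj ((by fun_prop : Measurable fun x => c - c * x)
      (measurableSet_Icc.inter hT)),
    volume_preimage_const_sub_mul hc (measurableSet_Icc.inter hT), hIcc, mul_add, ← mul_assoc,
    hweights, ← add_mul, ← ENNReal.ofReal_add hp0.le (sub_pos.2 hp1).le, add_sub_cancel,
    ENNReal.ofReal_one, one_mul]

open AdaptiveOrdering in
lemma measure_preimage_Iio_inter_eq_mul {Ω : Type*} [MeasurableSpace Ω] {μ : Measure Ω}
    [IsFiniteMeasure μ] (hp0 : 0 < p) (hp1 : p < 1) {n : ℕ} {P : Fin n → Ω → ℝ}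
    (hPm : ∀ i, Measurable (P i)) (hPindep : iIndepFun P μ)
    (hunif : ∀ i, μ.map (P i) = volume.restrict (Icc 0 1)) (i : Fin n) {A : Set Ω}
    (hA : MeasurableSet[σ(viewAlong (fun ω m => tent p (P m ω)) P
      (Subtype.val : {m : Fin n // m ≠ i} → Fin n))] A) :
    μ (P i ⁻¹' Iio p ∩ A) = ENNReal.ofReal p * μ A := by
  obtain ⟨M, hM, rfl⟩ := hA
  let others (ω : Ω) (m : {m : Fin n // m ≠ i}) : ℝ := P m ω
  have hindep : IndepFun (P i) others μ :=
    (hPindep.indepFun_finset {i} {i}ᶜ (by simp) hPm).comp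
      (φ := fun x : ({i} : Finset (Fin n)) → ℝ => x ⟨i, Finset.mem_singleton_self i⟩)
      (ψ := fun (z : ({i}ᶜ : Finset (Fin n)) → ℝ) (m : {m : Fin n // m ≠ i}) =>
        z ⟨m.1, by simpa using m.2⟩)
      (measurable_pi_apply _) (measurable_pi_lambda _ fun m => measurable_pi_apply _)
  let θ (q : ℝ × ({m : Fin n // m ≠ i} → ℝ)) : (Fin n → ℝ) × ({m : Fin n // m ≠ i} → ℝ) :=
    (fun m => if h : m = i then q.1 else tent p (q.2 ⟨m, h⟩), q.2)
  have hθ : Measurable θ := by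
    refine Measurable.prodMk (measurable_pi_lambda _ fun m => ?_) measurable_snd
    by_cases h : m = i
    · simp only [h, dite_true]; exact measurable_fst
    · simp only [h, dite_false]
      exact measurable_tent.comp ((measurable_pi_apply _).comp measurable_snd)
  have hview : viewAlong (fun ω m => tent p (P m ω)) P (Subtype.val : {m : Fin n // m ≠ i} → Fin n)
      = θ ∘ fun ω => (tent p (P i ω), others ω) := by
    funext ω
    refine Prod.ext (funext fun m => ?_) rfl
    by_cases h : m = i
    · subst h; simp [θ, viewAlong]
    · simp [θ, viewAlong, h, others]
  rw [hview, preimage_comp]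
  exact measure_preimage_inter_eq_mul_of_indepFun (hPm i)
    (measurable_pi_lambda others fun m => hPm m) hindep measurable_tent measurableSet_Iio
    (fun T hT => by rw [hunif i]; exact volume_restrict_Icc_Iio_inter_tent_preimage hp0 hp1 hT)
    (hθ hM)

end TentMasking

/-- For i.i.d. uniform p-values `P_1,…,P_n` with tent masking and an
adaptive ordering `π_n,…,π_1` (each `π_j` measurable w.r.t. the σ-field generated by
all masked p-values and the revealed p-values of the previously chosen indices
`π_n,…,π_{j+1}`), the indicators `1{h(P_{π_j}) = 1} = 1{P_{π_j} < p*}` are mutually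
independent Bernoulli(p*). -/
theorem adaptive_ordering_iid_bernoulli
    {Ω : Type*} [MeasurableSpace Ω] (μ : Measure Ω) [IsProbabilityMeasure μ]
    (n : ℕ) (pstar : ℝ) (hp : pstar ∈ Set.Ioo (0:ℝ) 1)
    (P : Fin n → Ω → ℝ) (hPm : ∀ i, Measurable (P i))
    (hPindep : iIndepFun P μ)
    (hunif : ∀ i, μ.map (P i) = volume.restrict (Set.Icc 0 1))
    (π : Fin n → Ω → Fin n)
    (hperm : ∀ ω, Function.Bijective (fun j => π j ω))
    (F : Fin n → MeasurableSpace Ω)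
    (hF : ∀ j, F j =
      MeasurableSpace.comap
        (fun ω (i : Fin n) => min (P i ω) (pstar / (1 - pstar) * (1 - P i ω))) inferInstance
      ⊔ MeasurableSpace.comap
        (fun ω (k : {k : Fin n // j < k}) => P (π k.val ω) ω) inferInstance)
    (hπ : ∀ j, Measurable[F j] (π j)) :
    iIndepFun
      (fun (j : Fin n) (ω : Ω) => if P (π j ω) ω < pstar then (1:ℝ) else 0) μ ∧
    ∀ j, μ {ω | P (π j ω) ω < pstar} = ENNReal.ofReal pstar := by
  obtain ⟨hp0, hp1⟩ := hp
  let G (ω : Ω) (i : Fin n) : ℝ := TentMasking.tent pstar (P i ω)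
  have hG : Measurable G := measurable_pi_lambda _ fun i => TentMasking.measurable_tent.comp (hPm i)
  have hπ' : ∀ j, Measurable[σ(AdaptiveOrdering.view G P π j)] (π j) := fun j => by
    convert hπ j
    rw [hF j, ← MeasurableSpace.comap_prodMk]
    rfl
  obtain ⟨hindep, hmarg⟩ := AdaptiveOrdering.iIndepSet_selected hG hPm measurableSet_Iio
    (fun ω => (hperm ω).injective) hπ'
    (fun i _ hA => TentMasking.measure_preimage_Iio_inter_eq_mul hp0 hp1 hPm hPindep hunif i hA)
  refine ⟨?_, hmarg⟩
  convert hindep.iIndepFun_indicator (β := ℝ) using 2 with j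
  ext ω
  simp [Set.indicator]
end

section
/- Let P_1, ..., P_n be random variables on [0,1] and H_0 ⊆ {1,...,n} a deterministic set of null indices such that {P_i : i ∈ H_0} are i.i.d. uniform on [0,1] and independent of {P_i : i ∉ H_0}. Fix p* ∈ (0,1) and apply tent masking h(P_i) = 2·1{P_i < p*} - 1, g(P_i) = min{P_i, (p*/(1-p*))(1-P_i)}. Let (π_n, ..., π_1) be a random ordering where each π_j is measurable with respect to σ(g(P_1), ..., g(P_n), P_{π_n}, ..., P_{π_{j+1}}). Then for every j ∈ {1,...,n}, conditionally on the σ-field generated by {1{h(P_{π_k}) = 1}}_{k=j+1}^n and {1{π_k ∈ H_0}}_{k=j+1}^n, and on the event {π_j ∈ H_0}, the conditional probability that h(P_{π_j}) = 1 equals p*. -/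
/-!
Fix a null index `i`. The ordering is produced by a measurable policy from the masked `p`-values
and the `p`-values revealed at earlier steps, so as long as `i` has not been revealed, the
ordering, and with it the event `π_j = i` together with everything revealed before step `j`, can
be recomputed by replaying the policy on `(g(P_i), (P_l)_{l ≠ i})`. This vector is independent of
`P_i` except through `g(P_i)`, and for uniform `P_i` the event `P_i < p*` is independent of
`g(P_i)` with probability `p*`. Summing over the null indices gives the claim.
-/

open MeasureTheory ProbabilityTheory Set
open scoped ENNReal

section Tent

variable {p : ℝ}

noncomputable def tent (p x : ℝ) : ℝ := min x (p / (1 - p) * (1 - x))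

lemma measurable_tent (p : ℝ) : Measurable (tent p) :=
  measurable_id.min (measurable_const.mul (measurable_const.sub measurable_id))

lemma tent_slope_mul (hp : p ∈ Ioo 0 1) : p / (1 - p) * (1 - p) = p :=
  div_mul_cancel₀ p (sub_ne_zero.mpr hp.2.ne')

lemma tent_slope_pos (hp : p ∈ Ioo 0 1) : 0 < p / (1 - p) :=
  div_pos hp.1 (sub_pos.mpr hp.2)

lemma tent_of_le (hp : p ∈ Ioo 0 1) {x : ℝ} (hx : x ≤ p) : tent p x = x := by
  have := tent_slope_mul hp
  have := tent_slope_pos hp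
  exact min_eq_left (by nlinarith)

lemma tent_of_ge (hp : p ∈ Ioo 0 1) {x : ℝ} (hx : p ≤ x) : tent p x = p / (1 - p) * (1 - x) := by
  have := tent_slope_mul hp
  have := tent_slope_pos hp
  exact min_eq_right (by nlinarith)

lemma Ico_inter_tent_preimage (hp : p ∈ Ioo 0 1) (A : Set ℝ) :
    Ico 0 p ∩ tent p ⁻¹' A = Ico 0 p ∩ A := by
  ext x
  simp only [mem_inter_iff, mem_preimage, and_congr_right_iff]
  intro hx
  rw [tent_of_le hp hx.2.le]

lemma Icc_inter_tent_preimage (hp : p ∈ Ioo 0 1) (A : Set ℝ) :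
    Icc p 1 ∩ tent p ⁻¹' A = (fun x => p / (1 - p) * (1 - x)) ⁻¹' (Icc 0 p ∩ A) := by
  have h1 := tent_slope_mul hp
  have h2 := tent_slope_pos hp
  ext x
  simp only [mem_inter_iff, mem_preimage, mem_Icc]
  constructor
  · rintro ⟨⟨hpx, hx1⟩, hA⟩
    rw [tent_of_ge hp hpx] at hA
    exact ⟨⟨by nlinarith, by nlinarith⟩, hA⟩
  · rintro ⟨⟨h0, hle⟩, hA⟩
    have hpx : p ≤ x := by nlinarith
    exact ⟨⟨hpx, by nlinarith⟩, by rwa [tent_of_ge hp hpx]⟩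

lemma Real.volume_preimage_mul_one_sub {c : ℝ} (hc : 0 < c) (s : Set ℝ) :
    volume ((fun x => c * (1 - x)) ⁻¹' s) = ENNReal.ofReal c⁻¹ * volume s := by
  have : (fun x => c * (1 - x)) ⁻¹' s = (fun x => -c * x) ⁻¹' ((fun y => c + y) ⁻¹' s) := by
    ext x; simp only [mem_preimage]; ring_nf
  rw [this, Real.volume_preimage_mul_left (neg_ne_zero.mpr hc.ne'), measure_preimage_add,
    abs_inv, abs_neg, abs_of_pos hc]

/-- The tent maps `[0, p)` identically and `[p, 1]` affinely with slope `-p / (1 - p)` onto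
`[0, p]`, so each level set carries mass in the ratio `p : 1 - p` on the two sides of `p`. -/
lemma uniform_Iio_inter_tent_preimage (hp : p ∈ Ioo 0 1) {A : Set ℝ} (hA : MeasurableSet A) :
    volume.restrict (Icc 0 1) (Iio p ∩ tent p ⁻¹' A)
      = ENNReal.ofReal p * volume.restrict (Icc 0 1) (tent p ⁻¹' A) := by
  set c := p / (1 - p)
  have hc := tent_slope_pos hp
  have hleft : Iio p ∩ tent p ⁻¹' A ∩ Icc 0 1 = Ico 0 p ∩ A := by
    rw [← Ico_inter_tent_preimage hp]
    ext x; simp only [mem_inter_iff, mem_Iio, mem_Icc, mem_Ico]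
    constructor
    · rintro ⟨⟨hxp, hA⟩, h0, -⟩; exact ⟨⟨h0, hxp⟩, hA⟩
    · rintro ⟨⟨h0, hxp⟩, hA⟩; exact ⟨⟨hxp, hA⟩, h0, by linarith [hp.2]⟩
  have hsplit : tent p ⁻¹' A ∩ Icc 0 1
      = Ico 0 p ∩ A ∪ (fun x => c * (1 - x)) ⁻¹' (Icc 0 p ∩ A) := by
    rw [← Ico_inter_tent_preimage hp, ← Icc_inter_tent_preimage hp, ← union_inter_distrib_right,
      Ico_union_Icc_eq_Icc hp.1.le hp.2.le, inter_comm]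
  have hdisj : Disjoint (Ico 0 p ∩ A) ((fun x => c * (1 - x)) ⁻¹' (Icc 0 p ∩ A)) := by
    rw [← Icc_inter_tent_preimage hp]
    exact Disjoint.mono inter_subset_left inter_subset_left
      (disjoint_left.mpr fun x hx hx' => hx.2.not_ge hx'.1)
  have hend : volume (Icc 0 p ∩ A) = volume (Ico 0 p ∩ A) :=
    measure_congr (Ico_ae_eq_Icc.symm.inter (ae_eq_refl A))
  have harith : ENNReal.ofReal p * (1 + ENNReal.ofReal c⁻¹) = 1 := by
    rw [← ENNReal.ofReal_one, ← ENNReal.ofReal_add zero_le_one (inv_pos.mpr hc).le,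
      ← ENNReal.ofReal_mul hp.1.le]
    congr 1
    have : 1 - p ≠ 0 := sub_ne_zero.mpr hp.2.ne'
    field_simp [c, hp.1.ne']
    ring
  rw [Measure.restrict_apply' measurableSet_Icc, Measure.restrict_apply' measurableSet_Icc,
    hleft, hsplit, measure_union hdisj
      ((measurable_const.mul (measurable_const.sub measurable_id)) (measurableSet_Icc.inter hA)),
    Real.volume_preimage_mul_one_sub hc, hend]
  calc volume (Ico 0 p ∩ A)
      = ENNReal.ofReal p * (1 + ENNReal.ofReal c⁻¹) * volume (Ico 0 p ∩ A) := by
        rw [harith, one_mul]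
    _ = _ := by ring

end Tent

theorem MeasurableSpace.comap_eval_le_comap {Ω κ β : Type*} [MeasurableSpace β] (Y : Ω → κ → β)
    (l : κ) :
    MeasurableSpace.comap (fun ω => Y ω l) inferInstance
      ≤ MeasurableSpace.comap Y inferInstance := by
  rw [show (fun ω => Y ω l) = (fun v : κ → β => v l) ∘ Y from rfl, ← MeasurableSpace.comap_comp]
  exact MeasurableSpace.comap_mono (measurable_pi_apply l).comap_le

theorem measurable_funSplitAt_symm {α β : Type*} [DecidableEq α] [MeasurableSpace β] (i : α) :
    Measurable (Equiv.funSplitAt i β).symm := by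
  refine measurable_pi_lambda _ fun l => ?_
  by_cases h : l = i
  · subst h; simpa using measurable_fst
  · simp only [Equiv.funSplitAt_symm_apply, h, dite_false]
    exact measurable_snd.eval

namespace MeasureTheory

variable {Ω α : Type*} [MeasurableSpace Ω] {μ : Measure Ω} [MeasurableSpace α]
  [MeasurableSingletonClass α] {X : Ω → α}

theorem measure_setOf_mem_inter_eq_sum (hX : Measurable X) (s : Finset α) (E : Set Ω) :
    μ ({ω | X ω ∈ s} ∩ E) = ∑ a ∈ s, μ ({ω | X ω = a} ∩ E) := by
  show μ (X ⁻¹' s ∩ E) = ∑ a ∈ s, μ (X ⁻¹' {a} ∩ E)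
  rw [← Measure.restrict_apply (hX s.measurableSet),
    ← sum_measure_preimage_singleton s fun a _ => hX (measurableSet_singleton a)]
  exact Finset.sum_congr rfl fun a _ => Measure.restrict_apply (hX (measurableSet_singleton a))

theorem measure_setOf_apply_inter_eq_sum (hX : Measurable X) (A : α → Set Ω) (s : Finset α)
    (E : Set Ω) :
    μ ({ω | ω ∈ A (X ω)} ∩ {ω | X ω ∈ s} ∩ E) = ∑ a ∈ s, μ (A a ∩ ({ω | X ω = a} ∩ E)) := by
  rw [inter_comm {ω | ω ∈ A (X ω)}, inter_assoc, measure_setOf_mem_inter_eq_sum hX]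
  refine Finset.sum_congr rfl fun a _ => congrArg μ (ext fun ω => ?_)
  simp only [mem_inter_iff, mem_ofPred_eq]
  constructor
  · rintro ⟨rfl, h, hE⟩; exact ⟨h, rfl, hE⟩
  · rintro ⟨h, rfl, hE⟩; exact ⟨rfl, h, hE⟩

end MeasureTheory

namespace ProbabilityTheory

variable {Ω : Type*} {mΩ : MeasurableSpace Ω} {μ : Measure Ω}

theorem Indep.sup_right_of_sup_left [IsZeroOrProbabilityMeasure μ] {m₁ m₂ m₃ : MeasurableSpace Ω}
    (h₁ : m₁ ≤ mΩ) (h₂ : m₂ ≤ mΩ) (h₃ : m₃ ≤ mΩ) (h₁₂ : Indep m₁ m₂ μ)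
    (h : Indep (m₁ ⊔ m₂) m₃ μ) : Indep m₁ (m₂ ⊔ m₃) μ := by
  let p : Set (Set Ω) := image2 (· ∩ ·) {s | MeasurableSet[m₂] s} {t | MeasurableSet[m₃] t}
  have hp : IsPiSystem p := by
    rintro _ ⟨s, hs, t, ht, rfl⟩ _ ⟨s', hs', t', ht', rfl⟩ -
    exact ⟨s ∩ s', hs.inter hs', t ∩ t', ht.inter ht', (inter_inter_inter_comm s t s' t').symm⟩
  have hgen : m₂ ⊔ m₃ = MeasurableSpace.generateFrom p := by
    refine le_antisymm (sup_le (fun s hs => ?_) fun t ht => ?_) (MeasurableSpace.generateFrom_le ?_)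
    · exact MeasurableSpace.measurableSet_generateFrom ⟨s, hs, univ, .univ, inter_univ s⟩
    · exact MeasurableSpace.measurableSet_generateFrom ⟨univ, .univ, t, ht, univ_inter t⟩
    · rintro _ ⟨s, hs, t, ht, rfl⟩
      exact MeasurableSet.inter (m := m₂ ⊔ m₃) (le_sup_left (b := m₃) s hs)
        (le_sup_right (a := m₂) t ht)
  refine IndepSets.indep h₁ (sup_le h₂ h₃) (@MeasurableSpace.isPiSystem_measurableSet Ω m₁) hp
    (@MeasurableSpace.generateFrom_measurableSet Ω m₁).symm hgen ?_
  rw [IndepSets_iff]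
  rintro a _ ha ⟨s, hs, t, ht, rfl⟩
  have hsplit := (Indep_iff _ _ μ).mp h
  calc μ (a ∩ (s ∩ t)) = μ (a ∩ s) * μ t := by
        rw [← inter_assoc]
        exact hsplit _ _ (MeasurableSet.inter (m := m₁ ⊔ m₂) (le_sup_left (b := m₂) a ha)
          (le_sup_right (a := m₁) s hs)) ht
    _ = μ a * (μ s * μ t) := by rw [(Indep_iff _ _ μ).mp h₁₂ _ _ ha hs, mul_assoc]
    _ = μ a * μ (s ∩ t) := by rw [hsplit _ _ (le_sup_right (a := m₁) s hs) ht]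

theorem indepFun_apply_ne [IsProbabilityMeasure μ] {ι β : Type*} [MeasurableSpace β] {X : ι → Ω → β}
    (hX : ∀ i, Measurable (X i)) {s : Set ι} (hs : iIndepFun (fun i : s => X i) μ)
    (hsc : IndepFun (fun ω (i : s) => X i ω) (fun ω (i : {i // i ∉ s}) => X i ω) μ)
    {i : ι} (hi : i ∈ s) :
    IndepFun (X i) (fun ω (l : {l // l ≠ i}) => X l ω) μ := by
  have hm : ∀ l : s, MeasurableSpace.comap (X l) inferInstance ≤ mΩ := fun l => (hX l).comap_le
  have hrest := indep_iSup_of_disjoint hm hs.iIndep (disjoint_compl_right (a := {⟨i, hi⟩}))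
  rw [iSup_singleton] at hrest
  have hcoord : ∀ l : s, MeasurableSpace.comap (X l) inferInstance
      ≤ MeasurableSpace.comap (fun ω (l : s) => X l ω) inferInstance := fun l =>
    MeasurableSpace.comap_eval_le_comap (fun ω (l : s) => X l ω) l
  have hsc' := indep_of_indep_of_le_left ((IndepFun_iff_Indep _ _ μ).mp hsc)
    (sup_le (hcoord ⟨i, hi⟩) (iSup₂_le fun l (_ : l ∈ ({⟨i, hi⟩}ᶜ : Set s)) => hcoord l))
  have hsup := hrest.sup_right_of_sup_left (hm _) (iSup₂_le fun l _ => hm l)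
    (measurable_pi_lambda _ fun l : {l // l ∉ s} => hX l.1).comap_le hsc'
  rw [IndepFun_iff_Indep]
  refine indep_of_indep_of_le_right hsup ?_
  rw [MeasurableSpace.pi, MeasurableSpace.comap_iSup]
  refine iSup_le fun l => ?_
  rw [MeasurableSpace.comap_comp]
  by_cases hl : l.1 ∈ s
  · exact (le_iSup₂ (f := fun (l : s) _ => MeasurableSpace.comap (X l) inferInstance) ⟨l, hl⟩
      (by simpa using l.2)).trans le_sup_left
  · exact (MeasurableSpace.comap_eval_le_comap (fun ω (l : {l // l ∉ s}) => X l ω)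
      ⟨l, hl⟩).trans le_sup_right

theorem IndepFun.measure_preimage_inter_prodMk_preimage [IsFiniteMeasure μ]
    {α β γ : Type*} [MeasurableSpace α] [MeasurableSpace β] [MeasurableSpace γ]
    {X : Ω → α} {V : Ω → β} (hXV : IndepFun X V μ) (hX : Measurable X) (hV : Measurable V)
    {g : α → γ} (hg : Measurable g) {B : Set α} (hB : MeasurableSet B) {q : ℝ≥0∞}
    (hq : ∀ A, MeasurableSet A → μ.map X (B ∩ g ⁻¹' A) = q * μ.map X (g ⁻¹' A))
    {U : Set (γ × β)} (hU : MeasurableSet U) :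
    μ (X ⁻¹' B ∩ (fun ω => (g (X ω), V ω)) ⁻¹' U) = q * μ ((fun ω => (g (X ω), V ω)) ⁻¹' U) := by
  have hgU : MeasurableSet ((fun z : α × β => (g z.1, z.2)) ⁻¹' U) :=
    ((hg.comp measurable_fst).prodMk measurable_snd) hU
  have hlaw : ∀ E, MeasurableSet E → μ ((fun ω => (X ω, V ω)) ⁻¹' E)
      = ∫⁻ v, μ.map X ((fun x => (x, v)) ⁻¹' E) ∂μ.map V := fun E hE => by
    rw [← Measure.map_apply (hX.prodMk hV) hE,
      (indepFun_iff_map_prod_eq_prod_map_map hX.aemeasurable hV.aemeasurable).mp hXV,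
      Measure.prod_apply_symm hE]
  calc μ (X ⁻¹' B ∩ (fun ω => (g (X ω), V ω)) ⁻¹' U)
      = ∫⁻ v, μ.map X (B ∩ g ⁻¹' {c | (c, v) ∈ U}) ∂μ.map V :=
        hlaw _ ((measurable_fst hB).inter hgU)
    _ = ∫⁻ v, q * μ.map X ((fun x => (x, v)) ⁻¹' ((fun z => (g z.1, z.2)) ⁻¹' U)) ∂μ.map V :=
        lintegral_congr fun v => hq _ (measurable_prodMk_right hU)
    _ = q * μ ((fun ω => (g (X ω), V ω)) ⁻¹' U) := by
        rw [lintegral_const_mul _ (measurable_measure_prodMk_right hgU), ← hlaw _ hgU]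
        rfl

end ProbabilityTheory

section History

variable {Ω ι α β : Type*} [Preorder ι] [MeasurableSpace Ω] [MeasurableSpace α] [Countable α]
  [MeasurableSingletonClass α] [MeasurableSpace β]

theorem measurable_apply_index {Y : α → Ω → β} (hY : ∀ a, Measurable (Y a)) {f : Ω → α}
    (hf : Measurable f) : Measurable fun ω => Y (f ω) ω :=
  (measurable_from_prod_countable_left (f := fun p : Ω × α => Y p.2 p.1) hY).comp
    (measurable_id.prodMk hf)

def history (π : ι → Ω → α) (Y : α → Ω → β) (j : ι) (ω : Ω) : {k // j < k} → α × β :=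
  fun k => (π k ω, Y (π k ω) ω)

theorem measurable_history {π : ι → Ω → α} (hπ : ∀ k, Measurable (π k)) {Y : α → Ω → β}
    (hY : ∀ a, Measurable (Y a)) (j : ι) : Measurable (history π Y j) :=
  measurable_pi_lambda _ fun k => (hπ k).prodMk (measurable_apply_index hY (hπ k))

end History

section Replay

variable {ι α β D : Type*} [Preorder ι] [WellFoundedGT ι]

theorem eq_of_backward_recursion {T : (k : ι) → ({k' // k < k'} → β) → α} {x σ : ι → α}
    {y z : α → β} (hx : ∀ k, x k = T k fun k' => y (x k'))
    (hσ : ∀ k, σ k = T k fun k' => z (σ k')) {j : ι} (hyz : ∀ k, j < k → y (x k) = z (x k))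
    {k : ι} (hjk : j ≤ k) : σ k = x k := by
  induction k using WellFoundedGT.induction with
  | _ k ih =>
    rw [hσ k, hx k]
    congr 1
    funext k'
    rw [ih k'.1 k'.2 (hjk.trans k'.2.le), hyz _ (hjk.trans_lt k'.2)]

/-- Steps are taken in decreasing order: the choice at step `k` may depend on the values observed
at the steps `k' > k`. -/
noncomputable def replay (Ψ : (k : ι) → D → ({k' // k < k'} → β) → α) (obs : D → α → β)
    (d : D) : ι → α :=
  wellFounded_gt.fix fun k rec => Ψ k d fun k' => obs d (rec k'.1 k'.2)

variable {Ψ : (k : ι) → D → ({k' // k < k'} → β) → α} {obs : D → α → β}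

theorem replay_eq (d : D) (k : ι) :
    replay Ψ obs d k = Ψ k d fun k' => obs d (replay Ψ obs d k') :=
  wellFounded_gt.fix_eq _ _

theorem eq_replay {d : D} {x : ι → α} (hx : ∀ k, x k = Ψ k d fun k' => obs d (x k')) :
    x = replay Ψ obs d :=
  funext fun k => eq_of_backward_recursion (replay_eq d) hx (j := k) (fun _ _ => rfl) le_rfl

section Unobserved

variable {d : D} {x : ι → α} {y : α → β} {i : α} {j k : ι}

theorem replay_eq_of_forall_ne (hx : ∀ k, x k = Ψ k d fun k' => y (x k'))
    (hobs : ∀ l, l ≠ i → obs d l = y l) (hne : ∀ k, j < k → x k ≠ i) (hjk : j ≤ k) :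
    replay Ψ obs d k = x k :=
  eq_of_backward_recursion hx (replay_eq d) (fun k hk => (hobs _ (hne k hk)).symm) hjk

theorem eq_replay_of_forall_ne (hx : ∀ k, x k = Ψ k d fun k' => y (x k'))
    (hobs : ∀ l, l ≠ i → obs d l = y l) (hne : ∀ k, j < k → replay Ψ obs d k ≠ i) (hjk : j ≤ k) :
    x k = replay Ψ obs d k :=
  eq_of_backward_recursion (replay_eq d) hx (fun k hk => hobs _ (hne k hk)) hjk

end Unobserved

variable [MeasurableSpace α] [Countable α] [MeasurableSingletonClass α] [MeasurableSpace β]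
  [MeasurableSpace D]

theorem measurable_replay (hΨ : ∀ k, Measurable (Function.uncurry (Ψ k)))
    (hobs : ∀ a, Measurable fun d => obs d a) (k : ι) : Measurable fun d => replay Ψ obs d k := by
  induction k using WellFoundedGT.induction with
  | _ k ih =>
    rw [funext fun d => replay_eq d k]
    exact (hΨ k).comp (measurable_id.prodMk
      (measurable_pi_lambda _ fun k' => measurable_apply_index hobs (ih k'.1 k'.2)))

/-- On `{π j = i}` the ordering from step `j` on coincides with the replay of the policy on `X`,
since `i` is not chosen after step `j`. -/
theorem exists_measurableSet_inter_history_eq_preimage [Countable ι] {Ω : Type*}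
    {π : ι → Ω → α} {Y : α → Ω → β} {X : Ω → D}
    (hΨ : ∀ k, Measurable (Function.uncurry (Ψ k))) (hobs : ∀ a, Measurable fun d => obs d a)
    (hπ : ∀ k ω, π k ω = Ψ k (X ω) fun k' => Y (π k' ω) ω)
    (hinj : ∀ ω, Function.Injective fun k => π k ω) {i : α}
    (hobsX : ∀ ω l, l ≠ i → obs (X ω) l = Y l ω) (j : ι) {M : Set ({k // j < k} → α × β)}
    (hM : MeasurableSet M) :
    ∃ T, MeasurableSet T ∧ {ω | π j ω = i} ∩ history π Y j ⁻¹' M = X ⁻¹' T := by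
  let ρ k d := replay Ψ obs d k
  have hρ : ∀ k, Measurable (ρ k) := measurable_replay hΨ hobs
  refine ⟨ρ j ⁻¹' {i} ∩ (⋂ k : {k // j < k}, ρ k ⁻¹' {i}ᶜ) ∩
      history ρ (fun a d => obs d a) j ⁻¹' M,
    ((hρ j (measurableSet_singleton i)).inter
      (.iInter fun k : {k // j < k} => hρ k (measurableSet_singleton i).compl)).inter
      (measurable_history hρ hobs j hM), ?_⟩
  ext ω
  have hagree (hne : ∀ k, j < k → π k ω ≠ i) {k : ι} (hk : j ≤ k) : ρ k (X ω) = π k ω :=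
    replay_eq_of_forall_ne (x := fun k => π k ω) (y := fun a => Y a ω) (hπ · ω) (hobsX ω) hne hk
  have hhist (hne : ∀ k, j < k → π k ω ≠ i) :
      history ρ (fun a d => obs d a) j (X ω) = history π Y j ω :=
    funext fun k => by simp only [history, hagree hne k.2.le, hobsX ω _ (hne k k.2)]
  simp only [mem_inter_iff, mem_ofPred_eq, mem_preimage, mem_iInter, mem_singleton_iff,
    mem_compl_iff]
  constructor
  · rintro ⟨hj, hM⟩
    have hne : ∀ k, j < k → π k ω ≠ i := fun k hk h => hk.ne' (hinj ω (h.trans hj.symm))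
    exact ⟨⟨(hagree hne le_rfl).trans hj, fun k => (hagree hne k.2.le).trans_ne (hne k k.2)⟩,
      hhist hne ▸ hM⟩
  · rintro ⟨⟨hj, hne⟩, hM⟩
    have h {k : ι} (hk : j ≤ k) : π k ω = ρ k (X ω) :=
      eq_replay_of_forall_ne (x := fun k => π k ω) (y := fun a => Y a ω) (hπ · ω) (hobsX ω)
        (fun k hk => hne ⟨k, hk⟩) hk
    have hne' : ∀ k, j < k → π k ω ≠ i := fun k hk => (h hk.le).trans_ne (hne ⟨k, hk⟩)
    exact ⟨(h le_rfl).trans hj, hhist hne' ▸ hM⟩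

end Replay

section AdaptiveOrdering

variable {Ω ι α β γ : Type*} [Preorder ι] [MeasurableSpace α] [MeasurableSpace β]
  [MeasurableSpace γ] {P : α → Ω → β} {π : ι → Ω → α} {mask : β → γ}

theorem exists_measurable_policy [StandardBorelSpace α] [Nonempty α]
    (hπ : ∀ k, Measurable[MeasurableSpace.comap (fun ω a => mask (P a ω)) inferInstance ⊔
      MeasurableSpace.comap (fun ω (k' : {k' // k < k'}) => P (π k' ω) ω) inferInstance] (π k)) :
    ∃ Φ : (k : ι) → (α → γ) × ({k' // k < k'} → β) → α, (∀ k, Measurable (Φ k)) ∧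
      ∀ k ω, π k ω = Φ k (fun a => mask (P a ω), fun k' => P (π k' ω) ω) := by
  have h : ∀ k, ∃ Φ : (α → γ) × ({k' // k < k'} → β) → α, Measurable Φ ∧
      π k = Φ ∘ fun ω => (fun a => mask (P a ω), fun k' => P (π k' ω) ω) := fun k => by
    have hk := hπ k
    rw [← MeasurableSpace.comap_prodMk] at hk
    exact hk.exists_eq_measurable_comp
  choose Φ hΦ hπΦ using h
  exact ⟨Φ, hΦ, fun k ω => congrFun (hπΦ k) ω⟩

theorem measurable_of_policy [MeasurableSpace Ω] [WellFoundedGT ι] [Countable α]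
    [MeasurableSingletonClass α]
    {Φ : (k : ι) → (α → γ) × ({k' // k < k'} → β) → α} (hΦ : ∀ k, Measurable (Φ k))
    (hmask : Measurable mask) (hP : ∀ a, Measurable (P a))
    (hπ : ∀ k ω, π k ω = Φ k (fun a => mask (P a ω), fun k' => P (π k' ω) ω)) (k : ι) :
    Measurable (π k) := by
  let Ψ : (k : ι) → (α → β) → ({k' // k < k'} → β) → α := fun k d v =>
    Φ k (fun a => mask (d a), v)
  have hrep : π k = fun ω => replay Ψ (fun d => d) (fun a => P a ω) k :=
    funext fun ω => congrFun (eq_replay (Ψ := Ψ) (obs := fun d => d) (x := fun k => π k ω)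
      (hπ · ω)) k
  have hΨ : ∀ k, Measurable (Function.uncurry (Ψ k)) := fun k => (hΦ k).comp
    ((measurable_pi_lambda _ fun a => hmask.comp measurable_fst.eval).prodMk measurable_snd)
  rw [hrep]
  exact (measurable_replay hΨ (fun a => measurable_pi_apply a) k).comp (measurable_pi_lambda _ hP)

end AdaptiveOrdering

/-- The selection event is determined by `tent p (P i)` and the other `p`-values. -/
theorem measure_lt_inter_select_eq_mul {Ω ι α : Type*} [MeasurableSpace Ω] [Preorder ι]
    [WellFoundedGT ι] [Countable ι] [MeasurableSpace α] [Countable α] [MeasurableSingletonClass α]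
    [DecidableEq α] {μ : Measure Ω} [IsFiniteMeasure μ] {p : ℝ} (hp : p ∈ Ioo 0 1)
    {P : α → Ω → ℝ} (hP : ∀ a, Measurable (P a)) {π : ι → Ω → α}
    {Φ : (k : ι) → (α → ℝ) × ({k' // k < k'} → ℝ) → α} (hΦ : ∀ k, Measurable (Φ k))
    (hπ : ∀ k ω, π k ω = Φ k (fun a => tent p (P a ω), fun k' => P (π k' ω) ω))
    (hinj : ∀ ω, Function.Injective fun k => π k ω) {i : α}
    (hind : IndepFun (P i) (fun ω (l : {l // l ≠ i}) => P l ω) μ)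
    (hunif : μ.map (P i) = volume.restrict (Icc 0 1)) (j : ι)
    {M : Set ({k // j < k} → α × ℝ)} (hM : MeasurableSet M) :
    μ ({ω | P i ω < p} ∩ ({ω | π j ω = i} ∩ history π P j ⁻¹' M))
      = ENNReal.ofReal p * μ ({ω | π j ω = i} ∩ history π P j ⁻¹' M) := by
  let unsplit := (Equiv.funSplitAt i ℝ).symm
  let Ψ : (k : ι) → ℝ × ({l // l ≠ i} → ℝ) → ({k' // k < k'} → ℝ) → α :=
    fun k d v => Φ k (unsplit (d.1, fun l => tent p (d.2 l)), v)
  have hΨ : ∀ k, Measurable (Function.uncurry (Ψ k)) := fun k =>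
    (hΦ k).comp (((measurable_funSplitAt_symm i).comp (measurable_fst.fst.prodMk
      (measurable_pi_lambda _ fun l => (measurable_tent p).comp measurable_fst.snd.eval))).prodMk
      measurable_snd)
  have hπΨ : ∀ k ω, π k ω = Ψ k (tent p (P i ω), fun l => P l ω) fun k' => P (π k' ω) ω :=
    fun k ω => (hπ k ω).trans (congrArg (fun f => Φ k (f, _))
      ((Equiv.funSplitAt i ℝ).symm_apply_apply (fun a => tent p (P a ω))).symm)
  obtain ⟨T, hT, hTeq⟩ := exists_measurableSet_inter_history_eq_preimage (Ψ := Ψ)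
    (obs := unsplit) (i := i) hΨ (fun a => (measurable_funSplitAt_symm i).eval) hπΨ hinj
    (fun ω l hl => by simp [unsplit, hl]) j hM
  rw [hTeq]
  exact hind.measure_preimage_inter_prodMk_preimage (hP i) (measurable_pi_lambda _ fun l => hP l)
    (measurable_tent p) measurableSet_Iio
    (fun A hA => hunif ▸ uniform_Iio_inter_tent_preimage hp hA) hT

/-- With null p-values (indices in `H0`) i.i.d. uniform and independent of
the non-nulls, tent masking, and an adaptive ordering `π_n,…,π_1`, for every `j`,
conditionally on the σ-field generated by `{1{h(P_{π_k})=1}}_{k>j}` and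
`{1{π_k ∈ H0}}_{k>j}`, and on the event `{π_j ∈ H0}`, the conditional probability of
`h(P_{π_j}) = 1` equals `p*`: for every set `S` measurable in that σ-field,
`ℙ({P_{π_j} < p*} ∩ {π_j ∈ H0} ∩ S) = p* · ℙ({π_j ∈ H0} ∩ S)`. -/
theorem adaptive_ordering_null_bernoulli
    {Ω : Type*} [MeasurableSpace Ω] (μ : Measure Ω) [IsProbabilityMeasure μ]
    (n : ℕ) (pstar : ℝ) (hp : pstar ∈ Set.Ioo (0:ℝ) 1)
    (P : Fin n → Ω → ℝ) (hPm : ∀ i, Measurable (P i))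
    (H0 : Finset (Fin n))
    (hnull_indep : iIndepFun
      (fun (i : {i : Fin n // i ∈ H0}) => P i.val) μ)
    (hnull_unif : ∀ i ∈ H0, μ.map (P i) = volume.restrict (Set.Icc 0 1))
    (hnull_nonnull_indep : IndepFun
      (fun ω (i : {i : Fin n // i ∈ H0}) => P i.val ω)
      (fun ω (i : {i : Fin n // i ∉ H0}) => P i.val ω) μ)
    (π : Fin n → Ω → Fin n)
    (hperm : ∀ ω, Function.Bijective (fun j => π j ω))
    (F : Fin n → MeasurableSpace Ω)
    (hF : ∀ j, F j =
      MeasurableSpace.comap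
        (fun ω (i : Fin n) => min (P i ω) (pstar / (1 - pstar) * (1 - P i ω))) inferInstance
      ⊔ MeasurableSpace.comap
        (fun ω (k : {k : Fin n // j < k}) => P (π k.val ω) ω) inferInstance)
    (hπ : ∀ j, Measurable[F j] (π j))
    (G : Fin n → MeasurableSpace Ω)
    (hG : ∀ j, G j =
      MeasurableSpace.comap
        (fun ω (k : {k : Fin n // j < k}) =>
          ((if P (π k.val ω) ω < pstar then (1:ℝ) else 0),
           (if π k.val ω ∈ H0 then (1:ℝ) else 0))) inferInstance) :
    ∀ j : Fin n, ∀ S : Set Ω, MeasurableSet[G j] S →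
      μ ({ω | P (π j ω) ω < pstar} ∩ {ω | π j ω ∈ H0} ∩ S)
        = ENNReal.ofReal pstar * μ ({ω | π j ω ∈ H0} ∩ S) := by
  intro j S hS
  have : Nonempty (Fin n) := ⟨j⟩
  obtain ⟨Φ, hΦm, hπΦ⟩ := exists_measurable_policy (mask := tent pstar) fun k => hF k ▸ hπ k
  have hπm := measurable_of_policy hΦm (measurable_tent pstar) hPm hπΦ
  have hreveal : Measurable fun z : Fin n × ℝ =>
      ((if z.2 < pstar then (1:ℝ) else 0), (if z.1 ∈ H0 then (1:ℝ) else 0)) :=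
    .prodMk (.ite (measurableSet_lt measurable_snd measurable_const) measurable_const
      measurable_const) (.ite (measurable_fst .of_discrete) measurable_const measurable_const)
  obtain ⟨M, hM, rfl⟩ := MeasurableSpace.measurableSet_comap.mp
    (((measurable_pi_lambda _ fun k => hreveal.comp (measurable_pi_apply k)).comp
      (comap_measurable (history π P j))).comap_le S (hG j ▸ hS))
  calc _ = ∑ i ∈ H0, μ ({ω | P i ω < pstar} ∩ ({ω | π j ω = i} ∩ history π P j ⁻¹' M)) :=
        measure_setOf_apply_inter_eq_sum (hπm j) (fun i => {ω | P i ω < pstar}) H0 _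
    _ = ∑ i ∈ H0, ENNReal.ofReal pstar * μ ({ω | π j ω = i} ∩ history π P j ⁻¹' M) :=
        Finset.sum_congr rfl fun i hi => measure_lt_inter_select_eq_mul hp hPm hΦm hπΦ
          (fun ω => (hperm ω).1)
          (indepFun_apply_ne hPm (s := (H0 : Set (Fin n))) hnull_indep hnull_nonnull_indep hi)
          (hnull_unif i hi) j hM
    _ = _ := by rw [← Finset.mul_sum, measure_setOf_mem_inter_eq_sum (hπm j)]
end

section
/- Let A_1, ..., A_n be i.i.d. Bernoulli(p*) random variables with p* ∈ (0,1), set M_t = Σ_{j=1}^t A_j, and for a constant integer v ≥ 1 define the stopping time τ = min{ t ∈ {1,...,n} : t - M_t ≥ v or t = n }. Then M_τ is stochastically dominated by a negative binomial distribution NB(v, p*): for every integer k ≥ 0, ℙ(M_τ ≥ k) ≤ ℙ(N ≥ k), where N has distribution ℙ(N = i) = C(v + i - 1, i) · p*^i · (1 - p*)^v for i = 0, 1, 2, .... -/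
/-!
Write `v = w + 1`. If `M_τ ≥ k` but `M_{k+w} < k`, then `k + w < τ` by monotonicity of `M`,
while more than `w` failures have occurred by time `k + w`, so the process would already have
stopped. Hence `ℙ(M_τ ≥ k) ≤ ℙ(Bin(k + w, p*) ≥ k)`, and this binomial tail equals
`ℙ(NB(w + 1, p*) ≥ k)`: both satisfy the first-trial recursion
`T(v, k + 1) = p T(v, k) + (1 - p) T(v - 1, k + 1)` with the same boundary values.
-/

open MeasureTheory ProbabilityTheory Finset

/-- `binomialTail p m k = ℙ(Bin(m, p) ≥ k)`, by conditioning on the first trial. -/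
noncomputable def binomialTail (p : ℝ) : ℕ → ℕ → ℝ
  | _, 0 => 1
  | 0, _ + 1 => 0
  | m + 1, k + 1 => p * binomialTail p m k + (1 - p) * binomialTail p m (k + 1)

section BinomialTail

variable {p : ℝ}

@[simp]
lemma binomialTail_zero_right (p : ℝ) (m : ℕ) : binomialTail p m 0 = 1 := by
  cases m <;> rfl

lemma binomialTail_of_lt (p : ℝ) : ∀ {m k : ℕ}, m < k → binomialTail p m k = 0
  | 0, _ + 1, _ => rfl
  | m + 1, k + 1, h => by
      simp only [binomialTail, binomialTail_of_lt p (by omega : m < k),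
        binomialTail_of_lt p (by omega : m < k + 1), mul_zero, add_zero]

lemma binomialTail_nonneg (h0 : 0 ≤ p) (h1 : p ≤ 1) : ∀ m k, 0 ≤ binomialTail p m k
  | _, 0 => by simp
  | 0, _ + 1 => le_rfl
  | m + 1, k + 1 => by
      have := binomialTail_nonneg h0 h1 m k
      have := binomialTail_nonneg h0 h1 m (k + 1)
      simp only [binomialTail]
      have : 0 ≤ 1 - p := by linarith
      positivity

lemma binomialTail_le_succ (h0 : 0 ≤ p) (h1 : p ≤ 1) :
    ∀ m k, binomialTail p m k ≤ binomialTail p (m + 1) k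
  | _, 0 => by simp
  | 0, _ + 1 => binomialTail_nonneg h0 h1 _ _
  | m + 1, k + 1 => by
      have : 0 ≤ 1 - p := by linarith
      simp only [binomialTail]
      gcongr <;> exact binomialTail_le_succ h0 h1 _ _

lemma binomialTail_mono_left (h0 : 0 ≤ p) (h1 : p ≤ 1) (k : ℕ) :
    Monotone (binomialTail p · k) :=
  monotone_nat_of_le_succ fun m => binomialTail_le_succ h0 h1 m k

end BinomialTail

noncomputable def negBinomialTerm (p : ℝ) (v j : ℕ) : ℝ :=
  ((v + j - 1).choose j : ℝ) * p ^ j * (1 - p) ^ v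

noncomputable def negBinomialTail (p : ℝ) (v k : ℕ) : ℝ :=
  ∑' i : ℕ, negBinomialTerm p v (k + i)

section NegBinomialTail

variable {p : ℝ}

lemma negBinomialTerm_zero_left_succ (p : ℝ) (j : ℕ) : negBinomialTerm p 0 (j + 1) = 0 := by
  simp [negBinomialTerm]

lemma negBinomialTerm_succ_succ (p : ℝ) (v j : ℕ) :
    negBinomialTerm p (v + 1) (j + 1)
      = p * negBinomialTerm p (v + 1) j + (1 - p) * negBinomialTerm p v (j + 1) := by
  simp only [negBinomialTerm, show v + 1 + (j + 1) - 1 = (v + j) + 1 by omega,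
    show v + 1 + j - 1 = v + j by omega, show v + (j + 1) - 1 = v + j by omega,
    Nat.choose_succ_succ, Nat.cast_add]
  ring

lemma hasSum_negBinomialTerm (h0 : 0 ≤ p) (h1 : p < 1) (w : ℕ) :
    HasSum (negBinomialTerm p (w + 1)) 1 := by
  have hp : ‖p‖ < 1 := by rwa [Real.norm_of_nonneg h0]
  have hq : (1 - p) ^ (w + 1) ≠ 0 := pow_ne_zero _ (by linarith)
  have hterm : negBinomialTerm p (w + 1)
      = fun j => ((j + w).choose w : ℝ) * p ^ j * (1 - p) ^ (w + 1) := by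
    funext j
    rw [negBinomialTerm, show w + 1 + j - 1 = j + w by omega, Nat.choose_symm_add]
  rw [hterm]
  simpa [hq] using (hasSum_choose_mul_geometric_of_norm_lt_one w hp).mul_right ((1 - p) ^ (w + 1))

lemma summable_negBinomialTerm (h0 : 0 ≤ p) (h1 : p < 1) :
    ∀ v, Summable (negBinomialTerm p v)
  | 0 => summable_of_ne_finset_zero (s := {0}) fun j hj => by
      obtain ⟨j, rfl⟩ := Nat.exists_eq_succ_of_ne_zero (by simpa using hj)
      exact negBinomialTerm_zero_left_succ p j
  | w + 1 => (hasSum_negBinomialTerm h0 h1 w).summable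

lemma negBinomialTail_zero_right (h0 : 0 ≤ p) (h1 : p < 1) (w : ℕ) :
    negBinomialTail p (w + 1) 0 = 1 := by
  simpa [negBinomialTail] using (hasSum_negBinomialTerm h0 h1 w).tsum_eq

lemma negBinomialTail_zero_left_succ (p : ℝ) (k : ℕ) : negBinomialTail p 0 (k + 1) = 0 := by
  simp [negBinomialTail, add_right_comm k 1, negBinomialTerm_zero_left_succ]

lemma negBinomialTail_succ_succ (h0 : 0 ≤ p) (h1 : p < 1) (v k : ℕ) :
    negBinomialTail p (v + 1) (k + 1)
      = p * negBinomialTail p (v + 1) k + (1 - p) * negBinomialTail p v (k + 1) := by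
  have hshift (u m : ℕ) : Summable fun i => negBinomialTerm p u (m + i) := by
    simpa [add_comm m] using
      (summable_nat_add_iff m).mpr (summable_negBinomialTerm h0 h1 u)
  have hshift' : Summable fun i => negBinomialTerm p v (k + i + 1) := by
    simpa only [add_right_comm k 1] using hshift v (k + 1)
  simp only [negBinomialTail, add_right_comm k 1, negBinomialTerm_succ_succ]
  rw [((hshift (v + 1) k).mul_left p).tsum_add (hshift'.mul_left (1 - p)),
    tsum_mul_left, tsum_mul_left]

theorem binomialTail_add_eq_negBinomialTail (h0 : 0 ≤ p) (h1 : p < 1) :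
    ∀ w k, binomialTail p (k + w) k = negBinomialTail p (w + 1) k
  | w, 0 => by rw [binomialTail_zero_right, negBinomialTail_zero_right h0 h1]
  | 0, k + 1 => by
      rw [negBinomialTail_succ_succ h0 h1, negBinomialTail_zero_left_succ,
        ← binomialTail_add_eq_negBinomialTail h0 h1 0 k]
      simp [binomialTail, binomialTail_of_lt p (Nat.lt_succ_self k)]
  | w + 1, k + 1 => by
      rw [negBinomialTail_succ_succ h0 h1, ← binomialTail_add_eq_negBinomialTail h0 h1 (w + 1) k,
        ← binomialTail_add_eq_negBinomialTail h0 h1 w (k + 1),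
        show k + 1 + (w + 1) = k + (w + 1) + 1 by omega, show k + 1 + w = k + (w + 1) by omega]
      rfl

end NegBinomialTail

section Bernoulli

variable {Ω : Type*} [MeasurableSpace Ω] {μ : Measure Ω} [IsProbabilityMeasure μ] {p : ℝ}

lemma measure_succ_le_add_le {S B : Ω → ℕ} (hp : 0 ≤ p) (hB : Measurable B)
    (hB01 : ∀ ω, B ω = 0 ∨ B ω = 1) (hB1 : μ {ω | B ω = 1} = ENNReal.ofReal p)
    (hind : IndepFun S B μ) (k : ℕ) :
    μ {ω | k + 1 ≤ S ω + B ω}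
      ≤ ENNReal.ofReal p * μ {ω | k ≤ S ω} + ENNReal.ofReal (1 - p) * μ {ω | k + 1 ≤ S ω} := by
  have hB0 : μ (B ⁻¹' {0}) = ENNReal.ofReal (1 - p) := by
    have : B ⁻¹' {0} = (B ⁻¹' {1})ᶜ := by
      ext ω; rcases hB01 ω with h | h <;> simp [h]
    rw [this, prob_compl_eq_one_sub (hB (measurableSet_singleton 1)), ENNReal.ofReal_sub 1 hp,
      ENNReal.ofReal_one, ← hB1]
    rfl
  have hsplit : {ω | k + 1 ≤ S ω + B ω}
      ⊆ (S ⁻¹' Set.Ici k ∩ B ⁻¹' {1}) ∪ (S ⁻¹' Set.Ici (k + 1) ∩ B ⁻¹' {0}) := by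
    intro ω hω
    rcases hB01 ω with h | h <;> simp_all
  calc μ {ω | k + 1 ≤ S ω + B ω}
      ≤ μ (S ⁻¹' Set.Ici k ∩ B ⁻¹' {1}) + μ (S ⁻¹' Set.Ici (k + 1) ∩ B ⁻¹' {0}) :=
        (measure_mono hsplit).trans (measure_union_le _ _)
    _ = μ {ω | k ≤ S ω} * ENNReal.ofReal p + μ {ω | k + 1 ≤ S ω} * ENNReal.ofReal (1 - p) := by
        rw [hind.measure_inter_preimage_eq_mul _ _ measurableSet_Ici (measurableSet_singleton 1),
          hind.measure_inter_preimage_eq_mul _ _ measurableSet_Ici (measurableSet_singleton 0),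
          hB0, ← hB1]
        rfl
    _ = _ := by rw [mul_comm, mul_comm (μ _)]

lemma measure_le_sum_le_binomialTail {ι : Type*} {A : ι → Ω → ℕ} (hp : p ∈ Set.Icc (0 : ℝ) 1)
    (hAm : ∀ j, Measurable (A j)) (hA01 : ∀ j ω, A j ω = 0 ∨ A j ω = 1)
    (hindep : iIndepFun A μ) (hber : ∀ j, μ {ω | A j ω = 1} = ENNReal.ofReal p)
    (s : Finset ι) (k : ℕ) :
    μ {ω | k ≤ ∑ j ∈ s, A j ω} ≤ ENNReal.ofReal (binomialTail p #s k) := by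
  classical
  induction s using Finset.induction_on generalizing k with
  | empty => cases k <;> simp [binomialTail]
  | @insert i s hi ih =>
    cases k with
    | zero => simp
    | succ k =>
      have hind : IndepFun (fun ω => ∑ j ∈ s, A j ω) (A i) μ := by
        simpa only [← Finset.sum_apply] using hindep.indepFun_finsetSum_of_notMem hAm hi
      have h1p : 0 ≤ 1 - p := by linarith [hp.2]
      calc μ {ω | k + 1 ≤ ∑ j ∈ insert i s, A j ω}
          = μ {ω | k + 1 ≤ ∑ j ∈ s, A j ω + A i ω} := by simp only [sum_insert hi, add_comm]
        _ ≤ ENNReal.ofReal p * ENNReal.ofReal (binomialTail p #s k)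
            + ENNReal.ofReal (1 - p) * ENNReal.ofReal (binomialTail p #s (k + 1)) :=
          (measure_succ_le_add_le hp.1 (hAm i) (hA01 i) (hber i) hind k).trans
            (by gcongr <;> exact ih _)
        _ = ENNReal.ofReal (binomialTail p #(insert i s) (k + 1)) := by
          rw [card_insert_of_notMem hi, binomialTail, ← ENNReal.ofReal_mul hp.1,
            ← ENNReal.ofReal_mul h1p, ← ENNReal.ofReal_add
              (mul_nonneg hp.1 (binomialTail_nonneg hp.1 hp.2 _ _))
              (mul_nonneg h1p (binomialTail_nonneg hp.1 hp.2 _ _))]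

end Bernoulli

lemma sub_lt_of_lt_sInf_stop {M : ℕ → ℕ} {n v t : ℕ} (hv : 1 ≤ v)
    (ht : t < sInf {t : ℕ | 1 ≤ t ∧ t ≤ n ∧ (v ≤ t - M t ∨ t = n)}) : t - M t < v := by
  obtain rfl | ht0 := Nat.eq_zero_or_pos t
  · omega
  have hle := (Nat.sInf_mem (Nat.nonempty_of_pos_sInf (ht0.trans ht))).2.1
  exact Nat.lt_of_not_le fun h => Nat.notMem_of_lt_sInf ht ⟨ht0, by omega, Or.inl h⟩

lemma Monotone.le_apply_add_of_le_apply {M : ℕ → ℕ} (hM : Monotone M) {w T k : ℕ}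
    (hT : ∀ t < T, t - M t < w + 1) (hk : k ≤ M T) : k ≤ M (k + w) := by
  by_cases h : k + w < T
  · have := hT _ h
    omega
  · exact hk.trans (hM (by omega))

theorem stopped_bernoulli_sum_negBinomial_dominated_general
    {Ω : Type*} [MeasurableSpace Ω] (μ : Measure Ω) [IsProbabilityMeasure μ]
    (n v : ℕ) (hv : 1 ≤ v)
    (pstar : ℝ) (hp : pstar ∈ Set.Ioo (0:ℝ) 1)
    (A : Fin n → Ω → ℕ) (hAm : ∀ j, Measurable (A j))
    (hA01 : ∀ j ω, A j ω = 0 ∨ A j ω = 1)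
    (hindep : iIndepFun A μ)
    (hber : ∀ j, μ {ω | A j ω = 1} = ENNReal.ofReal pstar)
    (M : ℕ → Ω → ℕ)
    (hM : ∀ t ω, M t ω = ∑ j ∈ Finset.univ.filter (fun j : Fin n => j.val < t), A j ω)
    (τ : Ω → ℕ)
    (hτ : ∀ ω, τ ω = sInf {t : ℕ | 1 ≤ t ∧ t ≤ n ∧ (v ≤ t - M t ω ∨ t = n)}) :
    ∀ k : ℕ, μ {ω | k ≤ M (τ ω) ω}
      ≤ ENNReal.ofReal (∑' i : ℕ,
          ((v + (k + i) - 1).choose (k + i) : ℝ) * pstar ^ (k + i) * (1 - pstar) ^ v) := by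
  intro k
  obtain ⟨w, rfl⟩ : ∃ w, v = w + 1 := ⟨v - 1, by omega⟩
  set s : Finset (Fin n) := Finset.univ.filter (fun j : Fin n => j.val < k + w)
  have hstop : {ω | k ≤ M (τ ω) ω} ⊆ {ω | k ≤ ∑ j ∈ s, A j ω} := fun ω hω => by
    have hmono : Monotone (M · ω) := fun t t' htt' => by
      simp only [hM]
      exact sum_le_sum_of_subset fun j => by simp only [mem_filter_univ]; omega
    rw [Set.mem_ofPred_eq, ← hM]
    exact hmono.le_apply_add_of_le_apply (fun t ht => sub_lt_of_lt_sInf_stop hv (hτ ω ▸ ht)) hω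
  have hcard : #s ≤ k + w := by simp [s, Fin.card_filter_val_lt]
  calc μ {ω | k ≤ M (τ ω) ω}
      ≤ μ {ω | k ≤ ∑ j ∈ s, A j ω} := measure_mono hstop
    _ ≤ ENNReal.ofReal (binomialTail pstar #s k) :=
      measure_le_sum_le_binomialTail (Set.Ioo_subset_Icc_self hp) hAm hA01 hindep hber s k
    _ ≤ ENNReal.ofReal (binomialTail pstar (k + w) k) :=
      ENNReal.ofReal_le_ofReal (binomialTail_mono_left hp.1.le hp.2.le k hcard)
    _ = ENNReal.ofReal (negBinomialTail pstar (w + 1) k) := by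
      rw [binomialTail_add_eq_negBinomialTail hp.1.le hp.2]

/-- For i.i.d. Bernoulli(p*) variables `A_1,…,A_n`, partial sums
`M_t = Σ_{j≤t} A_j`, and the stopping time
`τ = min{t ∈ {1,…,n} : t - M_t ≥ v or t = n}` (where `v ≥ 1`), the stopped sum `M_τ`
is stochastically dominated by `NB(v, p*)`: for every `k`,
`ℙ(M_τ ≥ k) ≤ Σ_{i ≥ k} C(v+i-1, i)·p*^i·(1-p*)^v`. -/
theorem stopped_bernoulli_sum_negBinomial_dominated
    {Ω : Type*} [MeasurableSpace Ω] (μ : Measure Ω) [IsProbabilityMeasure μ]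
    (n v : ℕ) (hn : 1 ≤ n) (hv : 1 ≤ v)
    (pstar : ℝ) (hp : pstar ∈ Set.Ioo (0:ℝ) 1)
    (A : Fin n → Ω → ℕ) (hAm : ∀ j, Measurable (A j))
    (hA01 : ∀ j ω, A j ω = 0 ∨ A j ω = 1)
    (hindep : iIndepFun A μ)
    (hber : ∀ j, μ {ω | A j ω = 1} = ENNReal.ofReal pstar)
    (M : ℕ → Ω → ℕ)
    (hM : ∀ t ω, M t ω = ∑ j ∈ Finset.univ.filter (fun j : Fin n => j.val < t), A j ω)
    (τ : Ω → ℕ)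
    (hτ : ∀ ω, τ ω = sInf {t : ℕ | 1 ≤ t ∧ t ≤ n ∧ (v ≤ t - M t ω ∨ t = n)}) :
    ∀ k : ℕ, μ {ω | k ≤ M (τ ω) ω}
      ≤ ENNReal.ofReal (∑' i : ℕ,
          ((v + (k + i) - 1).choose (k + i) : ℝ) * pstar ^ (k + i) * (1 - pstar) ^ v) :=
  stopped_bernoulli_sum_negBinomial_dominated_general μ n v hv pstar hp A hAm hA01 hindep hber M hM
    τ hτ
end

section
/- Let a_1, ..., a_n ∈ {0,1} be any binary sequence, set M_t = Σ_{j=1}^t a_j, and fix an integer v ≥ 1. Define the forward stopping time τ° = min{ t ∈ {1,...,n} : t - M_t ≥ v or t = n } and the backward stopping time τᵇ = max{ s ∈ {1,...,n} : s - M_s < v or s = 1 }. Then M_{τᵇ} = M_{τ°}. -/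
/-!
The zero count `t - M t` is nondecreasing in `t`, so both stopping times look for the same
threshold crossing: `τᵇ` is either `τ°` itself or `τ° - 1`. In the second case the zero count
increases at `τ°`, so `a_{τ°} = 0` and the partial sum does not move between `τ° - 1` and `τ°`.
-/

/-- The forward stopping time `τ°`, with a general count `Z t` in place of `t - M t`. -/
noncomputable def forwardStop (Z : ℕ → ℕ) (n v : ℕ) : ℕ :=
  sInf {t : ℕ | 1 ≤ t ∧ t ≤ n ∧ (v ≤ Z t ∨ t = n)}

/-- The backward stopping time `τᵇ`, with a general count `Z t` in place of `t - M t`. -/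
noncomputable def backwardStop (Z : ℕ → ℕ) (n v : ℕ) : ℕ :=
  sSup {s : ℕ | 1 ≤ s ∧ s ≤ n ∧ (Z s < v ∨ s = 1)}

section StoppingTimes

variable {Z : ℕ → ℕ} {n v : ℕ}

theorem forwardStop_mem (hn : 1 ≤ n) :
    forwardStop Z n v ∈ {t : ℕ | 1 ≤ t ∧ t ≤ n ∧ (v ≤ Z t ∨ t = n)} :=
  Nat.sInf_mem ⟨n, hn, le_rfl, Or.inr rfl⟩

theorem lt_of_lt_forwardStop (hn : 1 ≤ n) {t : ℕ} (ht : 1 ≤ t) (hlt : t < forwardStop Z n v) :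
    Z t < v := by
  have hle : forwardStop Z n v ≤ n := (forwardStop_mem hn).2.1
  by_contra! hv
  exact Nat.notMem_of_lt_sInf hlt ⟨ht, by omega, Or.inl hv⟩

theorem backwardStop_mem (hn : 1 ≤ n) :
    backwardStop Z n v ∈ {s : ℕ | 1 ≤ s ∧ s ≤ n ∧ (Z s < v ∨ s = 1)} :=
  Nat.sSup_mem ⟨1, le_rfl, hn, Or.inr rfl⟩ ⟨n, fun _ hs => hs.2.1⟩

theorem le_of_backwardStop_lt {s : ℕ} (hlt : backwardStop Z n v < s) (hs : s ≤ n) :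
    v ≤ Z s := by
  by_contra! hv
  unfold backwardStop at hlt
  exact hlt.not_ge (le_csSup ⟨n, fun _ hs => hs.2.1⟩ ⟨by omega, hs, Or.inl hv⟩)

theorem backwardStop_eq_or_succ_eq (hZ : Monotone Z) (hn : 1 ≤ n) :
    backwardStop Z n v = forwardStop Z n v ∨
      (backwardStop Z n v + 1 = forwardStop Z n v ∧
        Z (backwardStop Z n v) < Z (forwardStop Z n v)) := by
  set τo := forwardStop Z n v
  set τb := backwardStop Z n v
  obtain ⟨hτo_pos, hτo_le, hτo_stop⟩ : τo ∈ _ := forwardStop_mem hn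
  obtain ⟨hτb_pos, hτb_le, hτb_stop⟩ : τb ∈ _ := backwardStop_mem hn
  have hτb_le_τo : τb ≤ τo := by
    by_contra! hlt
    have hv : v ≤ Z τo := hτo_stop.resolve_right (by omega)
    have hmono : Z τo ≤ Z τb := hZ hlt.le
    omega
  have hτo_le_succ : τo ≤ τb + 1 := by
    by_contra! hlt
    have hbelow : Z (τo - 1) < v := lt_of_lt_forwardStop hn (by omega) (by omega)
    have habove : v ≤ Z (τo - 1) := le_of_backwardStop_lt (n := n) (by omega) (by omega)
    omega
  rcases hτb_le_τo.eq_or_lt with heq | hlt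
  · exact Or.inl heq
  · have hbelow : Z τb < v := lt_of_lt_forwardStop hn hτb_pos hlt
    have habove : v ≤ Z τo := le_of_backwardStop_lt hlt hτo_le
    exact Or.inr ⟨by omega, by omega⟩

end StoppingTimes

section UnitSteps

variable {M : ℕ → ℕ} (hM : ∀ t, M (t + 1) = M t ∨ M (t + 1) = M t + 1)
include hM

theorem monotone_sub_of_unit_steps : Monotone fun t => t - M t :=
  monotone_nat_of_le_succ fun t => by rcases hM t with h | h <;> omega

theorem eq_of_sub_lt_succ_sub {t : ℕ} (h : t - M t < t + 1 - M (t + 1)) : M (t + 1) = M t := by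
  rcases hM t with h' | h' <;> omega

end UnitSteps

theorem forward_backward_stopping_same_sum_general
    (n v : ℕ) (hn : 1 ≤ n)
    (a : ℕ → ℕ) (ha : ∀ j, a j = 0 ∨ a j = 1)
    (M : ℕ → ℕ) (hM : ∀ t, M t = ∑ j ∈ Finset.Icc 1 t, a j)
    (τo τb : ℕ)
    (hτo : τo = sInf {t : ℕ | 1 ≤ t ∧ t ≤ n ∧ (v ≤ t - M t ∨ t = n)})
    (hτb : τb = sSup {s : ℕ | 1 ≤ s ∧ s ≤ n ∧ (s - M s < v ∨ s = 1)}) :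
    M τb = M τo := by
  have hstep : ∀ t, M (t + 1) = M t ∨ M (t + 1) = M t + 1 := fun t => by
    rw [hM, hM, Finset.sum_Icc_succ_top (by omega)]
    rcases ha (t + 1) with h | h <;> simp [h]
  change τo = forwardStop (fun t => t - M t) n v at hτo
  change τb = backwardStop (fun t => t - M t) n v at hτb
  subst hτo hτb
  rcases backwardStop_eq_or_succ_eq (monotone_sub_of_unit_steps hstep) hn with heq | ⟨hsucc, hlt⟩
  · rw [heq]
  · rw [← hsucc] at hlt ⊢
    exact (eq_of_sub_lt_succ_sub hstep hlt).symm

/-- For any binary sequence `a_1,…,a_n` with partial sums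
`M_t = Σ_{j=1}^t a_j` and an integer `v ≥ 1`, the forward stopping time
`τ° = min{t ∈ {1,…,n} : t - M_t ≥ v or t = n}` and the backward stopping time
`τᵇ = max{s ∈ {1,…,n} : s - M_s < v or s = 1}` satisfy `M_{τᵇ} = M_{τ°}`. -/
theorem forward_backward_stopping_same_sum
    (n v : ℕ) (hn : 1 ≤ n) (hv : 1 ≤ v)
    (a : ℕ → ℕ) (ha : ∀ j, a j = 0 ∨ a j = 1)
    (M : ℕ → ℕ) (hM : ∀ t, M t = ∑ j ∈ Finset.Icc 1 t, a j)
    (τo τb : ℕ)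
    (hτo : τo = sInf {t : ℕ | 1 ≤ t ∧ t ≤ n ∧ (v ≤ t - M t ∨ t = n)})
    (hτb : τb = sSup {s : ℕ | 1 ≤ s ∧ s ≤ n ∧ (s - M s < v ∨ s = 1)}) :
    M τb = M τo :=
  forward_backward_stopping_same_sum_general n v hn a ha M hM τo τb hτo hτb
end

section
/- Let A_1, ..., A_n be i.i.d. Bernoulli(p*) random variables with p* ∈ (0,1). For t = 0, 1, ..., n-1 define the shrinking sum M̃_t = Σ_{j=1}^{n-t} A_j, and for a constant integer v ≥ 1 define the stopping time τ̃ = min{ t ∈ {0,...,n-1} : (n - t) - M̃_t < v or t = n - 1 } (a stopping time with respect to the filtration σ(M̃_t, A_{n-t+1}, ..., A_n)). Then M̃_{τ̃} is stochastically dominated by NB(v, p*): for every integer k ≥ 0, ℙ(M̃_{τ̃} ≥ k) ≤ ℙ(N ≥ k) where N ~ NB(v, p*). -/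
/-!
At time `τ̃` the first `n - τ̃` variables contain fewer than `v` zeros, so on the event
`M̃_τ̃ ≥ k` the first `min n (k + v - 1)` variables already contain at least `k` ones. This prefix
sum is binomial, fewer trials only make `≥ k` successes less likely, and
`ℙ(Bin(k + v - 1, p) ≥ k) = ℙ(NB(v, p) ≥ k)`: both events say that the `k`-th success precedes
the `v`-th failure.
-/

open MeasureTheory ProbabilityTheory Set

section BinomialCdf

variable {p : ℝ}

noncomputable def binomialPmf (p : ℝ) (m j : ℕ) : ℝ :=
  (m.choose j : ℝ) * p ^ j * (1 - p) ^ (m - j)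

/-- `ℙ(Bin(m, p) < k)`, with a strict inequality. -/
noncomputable def binomialCdf (p : ℝ) (m k : ℕ) : ℝ :=
  ∑ j ∈ Finset.range k, binomialPmf p m j

lemma binomialPmf_nonneg (hp₀ : 0 ≤ p) (hp₁ : p ≤ 1) (m j : ℕ) :
    0 ≤ binomialPmf p m j := by
  have : 0 ≤ 1 - p := sub_nonneg.2 hp₁
  unfold binomialPmf
  positivity

lemma binomialPmf_succ_zero (m : ℕ) :
    binomialPmf p (m + 1) 0 = (1 - p) * binomialPmf p m 0 := by
  simp [binomialPmf, pow_succ']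

lemma binomialPmf_succ_succ (m j : ℕ) :
    binomialPmf p (m + 1) (j + 1)
      = (1 - p) * binomialPmf p m (j + 1) + p * binomialPmf p m j := by
  simp only [binomialPmf, Nat.choose_succ_succ, Nat.cast_add, Nat.add_sub_add_right]
  rcases lt_or_ge m (j + 1) with hm | hm
  · simp [Nat.choose_eq_zero_of_lt hm]
    ring
  · rw [show m - j = m - (j + 1) + 1 by omega]
    ring

lemma binomialCdf_nonneg (hp₀ : 0 ≤ p) (hp₁ : p ≤ 1) (m k : ℕ) :
    0 ≤ binomialCdf p m k :=
  Finset.sum_nonneg fun j _ => binomialPmf_nonneg hp₀ hp₁ m j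

@[simp]
lemma binomialCdf_zero_right (m : ℕ) : binomialCdf p m 0 = 0 := by
  simp [binomialCdf]

lemma binomialCdf_monotone (hp₀ : 0 ≤ p) (hp₁ : p ≤ 1) (m : ℕ) : Monotone (binomialCdf p m) :=
  fun _ _ h => Finset.sum_le_sum_of_subset_of_nonneg (Finset.range_subset_range.2 h)
    fun j _ _ => binomialPmf_nonneg hp₀ hp₁ m j

lemma binomialCdf_zero_succ (k : ℕ) : binomialCdf p 0 (k + 1) = 1 := by
  simp [binomialCdf, binomialPmf, Finset.sum_range_succ']

lemma binomialCdf_succ_succ (m k : ℕ) :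
    binomialCdf p (m + 1) (k + 1)
      = (1 - p) * binomialCdf p m (k + 1) + p * binomialCdf p m k := by
  simp only [binomialCdf, Finset.sum_range_succ', binomialPmf_succ_succ, binomialPmf_succ_zero,
    Finset.sum_add_distrib, ← Finset.mul_sum]
  ring

lemma binomialCdf_antitone (hp₀ : 0 ≤ p) (hp₁ : p ≤ 1) (k : ℕ) :
    Antitone fun m => binomialCdf p m k := by
  refine antitone_nat_of_succ_le fun m => ?_
  cases k with
  | zero => simp
  | succ k =>
    rw [binomialCdf_succ_succ]
    nlinarith [binomialCdf_monotone hp₀ hp₁ m k.le_succ]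

end BinomialCdf

section NegBinomial

variable {p : ℝ} {v : ℕ}

noncomputable def negBinomialPmf (v : ℕ) (p : ℝ) (j : ℕ) : ℝ :=
  ((v + j - 1).choose j : ℝ) * p ^ j * (1 - p) ^ v

lemma hasSum_negBinomialPmf (hv : 1 ≤ v) (hp : |p| < 1) : HasSum (negBinomialPmf v p) 1 := by
  obtain ⟨r, rfl⟩ : ∃ r, v = r + 1 := ⟨v - 1, by omega⟩
  have hq : (1 - p) ^ (r + 1) ≠ 0 := pow_ne_zero _ (sub_ne_zero.2 (abs_lt.1 hp).2.ne')
  have h := (hasSum_choose_mul_geometric_of_norm_lt_one r hp).mul_right ((1 - p) ^ (r + 1))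
  rw [one_div_mul_cancel hq] at h
  refine h.congr_fun fun j => ?_
  rw [negBinomialPmf, show r + 1 + j - 1 = j + r by omega, Nat.choose_symm_add]

lemma tsum_negBinomialPmf_nat_add (hv : 1 ≤ v) (hp : |p| < 1) (k : ℕ) :
    ∑' i, negBinomialPmf v p (k + i) = 1 - ∑ j ∈ Finset.range k, negBinomialPmf v p j := by
  have h := (hasSum_negBinomialPmf hv hp).summable.sum_add_tsum_nat_add k
  rw [(hasSum_negBinomialPmf hv hp).tsum_eq] at h
  simp_rw [add_comm k]
  linarith

lemma binomialCdf_add_pred_eq_sum_negBinomialPmf (hv : 1 ≤ v) (k : ℕ) :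
    binomialCdf p (k + v - 1) k = ∑ j ∈ Finset.range k, negBinomialPmf v p j := by
  induction k with
  | zero => simp
  | succ k ih =>
    rw [show k + 1 + v - 1 = k + v - 1 + 1 by omega, binomialCdf_succ_succ, binomialCdf,
      Finset.sum_range_succ, ← binomialCdf, ih, Finset.sum_range_succ, negBinomialPmf,
      binomialPmf, show k + v - 1 - k = v - 1 by omega, show v + k - 1 = k + v - 1 by omega]
    rw [show (1 - p) ^ v = (1 - p) * (1 - p) ^ (v - 1) by rw [← pow_succ']; congr 1; omega]
    ring

end NegBinomial

section PrefixSum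

variable {n : ℕ}

def prefixSum (a : Fin n → ℕ) (m : ℕ) : ℕ :=
  ∑ j ∈ Finset.univ.filter (fun j : Fin n => j.val < m), a j

variable {a : Fin n → ℕ}

@[simp]
lemma prefixSum_zero : prefixSum a 0 = 0 := by
  simp [prefixSum]

lemma prefixSum_succ_of_lt {m : ℕ} (h : m < n) :
    prefixSum a (m + 1) = prefixSum a m + a ⟨m, h⟩ := by
  have hfilter : Finset.univ.filter (fun j : Fin n => j.val < m + 1)
      = insert ⟨m, h⟩ (Finset.univ.filter (fun j : Fin n => j.val < m)) := by
    ext j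
    simp only [Finset.mem_filter, Finset.mem_univ, true_and, Finset.mem_insert, Fin.ext_iff]
    omega
  rw [prefixSum, hfilter, Finset.sum_insert (by simp), add_comm]
  rfl

lemma prefixSum_succ_of_le {m : ℕ} (h : n ≤ m) : prefixSum a (m + 1) = prefixSum a m := by
  unfold prefixSum
  congr 1
  ext j
  simp only [Finset.mem_filter, Finset.mem_univ, true_and]
  omega

lemma prefixSum_mono : Monotone (prefixSum a) :=
  fun _ _ h => Finset.sum_le_sum_of_subset fun j => by
    simp only [Finset.mem_filter, Finset.mem_univ, true_and]
    omega

lemma prefixSum_le_add_sub (ha : ∀ j, a j ≤ 1) {l m : ℕ} (h : l ≤ m) :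
    prefixSum a m ≤ prefixSum a l + (m - l) := by
  induction m, h using Nat.le_induction with
  | base => simp
  | succ m hlm ih =>
    rcases lt_or_ge m n with hm | hm
    · rw [prefixSum_succ_of_lt hm]
      have := ha ⟨m, hm⟩
      omega
    · rw [prefixSum_succ_of_le hm]
      omega

lemma prefixSum_le_self (ha : ∀ j, a j ≤ 1) (m : ℕ) : prefixSum a m ≤ m := by
  simpa using prefixSum_le_add_sub ha m.zero_le

lemma le_prefixSum_min (ha : ∀ j, a j ≤ 1) {v L k : ℕ} (hv : 1 ≤ v) (hL : L ≤ n)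
    (hstop : L - prefixSum a L < v ∨ L ≤ 1) (hk : k ≤ prefixSum a L) :
    k ≤ prefixSum a (min n (k + v - 1)) := by
  rcases Nat.eq_zero_or_pos k with rfl | hk₀
  · exact Nat.zero_le _
  have hzeros : L - prefixSum a L < v := by
    have := prefixSum_le_self ha L
    omega
  rcases le_or_gt L (min n (k + v - 1)) with h | h
  · exact hk.trans (prefixSum_mono h)
  · have hsub := prefixSum_le_add_sub ha h.le
    have hself := prefixSum_le_self ha (min n (k + v - 1))
    omega

end PrefixSum

section BernoulliSums

variable {Ω : Type*} [MeasurableSpace Ω] {μ : Measure Ω} {p : ℝ}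

lemma measure_add_bernoulli_lt_succ [IsProbabilityMeasure μ] {S B : Ω → ℕ}
    (hS : Measurable S) (hB : Measurable B) (hB01 : ∀ ω, B ω = 0 ∨ B ω = 1)
    (hSB : IndepFun S B μ) (hp : 0 ≤ p)
    (hB1 : μ {ω | B ω = 1} = ENNReal.ofReal p) (k : ℕ) :
    μ {ω | S ω + B ω < k + 1}
      = μ {ω | S ω < k + 1} * ENNReal.ofReal (1 - p) + μ {ω | S ω < k} * ENNReal.ofReal p := by
  have hB1meas : MeasurableSet (B ⁻¹' {1}) := hB (measurableSet_singleton 1)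
  have hB1pre : μ (B ⁻¹' {1}) = ENNReal.ofReal p := hB1
  have hB0 : μ (B ⁻¹' {0}) = ENNReal.ofReal (1 - p) := by
    have hcompl : B ⁻¹' {0} = (B ⁻¹' {1})ᶜ := by
      ext ω
      rcases hB01 ω with h | h <;> simp [h]
    rw [hcompl, prob_compl_eq_one_sub hB1meas, hB1pre, ENNReal.ofReal_sub 1 hp, ENNReal.ofReal_one]
  have hsplit : {ω | S ω + B ω < k + 1}
      = (S ⁻¹' Iio (k + 1) ∩ B ⁻¹' {0}) ∪ (S ⁻¹' Iio k ∩ B ⁻¹' {1}) := by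
    ext ω
    rcases hB01 ω with h | h <;> simp [h]
  have hdisj : Disjoint (S ⁻¹' Iio (k + 1) ∩ B ⁻¹' {0}) (S ⁻¹' Iio k ∩ B ⁻¹' {1}) :=
    Set.disjoint_left.2 fun ω h₀ h₁ => by simp_all
  rw [hsplit, measure_union hdisj ((hS measurableSet_Iio).inter hB1meas),
    hSB.measure_inter_preimage_eq_mul _ _ measurableSet_Iio (measurableSet_singleton 0),
    hSB.measure_inter_preimage_eq_mul _ _ measurableSet_Iio (measurableSet_singleton 1),
    hB0, hB1pre]
  rfl

variable {n : ℕ} {A : Fin n → Ω → ℕ}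

lemma measurable_prefixSum (hA : ∀ j, Measurable (A j)) (m : ℕ) :
    Measurable fun ω => prefixSum (A · ω) m :=
  Finset.measurable_sum _ fun j _ => hA j

lemma iIndepFun.indepFun_prefixSum (hA : ∀ j, Measurable (A j)) (hindep : iIndepFun A μ)
    {m : ℕ} (hm : m < n) : IndepFun (fun ω => prefixSum (A · ω) m) (A ⟨m, hm⟩) μ := by
  have h := hindep.indepFun_finsetSum_of_notMem hA
    (s := Finset.univ.filter (fun j : Fin n => j.val < m)) (i := ⟨m, hm⟩) (by simp)
  convert h using 1
  ext ω
  simp [prefixSum]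

lemma measure_prefixSum_lt [IsProbabilityMeasure μ] (hA : ∀ j, Measurable (A j))
    (hA01 : ∀ j ω, A j ω = 0 ∨ A j ω = 1)
    (hindep : iIndepFun A μ) (hp₀ : 0 ≤ p) (hp₁ : p ≤ 1)
    (hber : ∀ j, μ {ω | A j ω = 1} = ENNReal.ofReal p) {m : ℕ} (hm : m ≤ n) (k : ℕ) :
    μ {ω | prefixSum (A · ω) m < k} = ENNReal.ofReal (binomialCdf p m k) := by
  induction m generalizing k with
  | zero =>
    cases k with
    | zero => simp
    | succ k => simp [binomialCdf_zero_succ]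
  | succ m ih =>
    cases k with
    | zero => simp
    | succ k =>
      have hm' : m < n := hm
      simp_rw [prefixSum_succ_of_lt hm']
      have hq : 0 ≤ 1 - p := sub_nonneg.2 hp₁
      rw [measure_add_bernoulli_lt_succ (measurable_prefixSum hA m) (hA _) (hA01 _)
          (iIndepFun.indepFun_prefixSum hA hindep hm') hp₀ (hber _),
        ih hm'.le, ih hm'.le, binomialCdf_succ_succ,
        ← ENNReal.ofReal_mul (binomialCdf_nonneg hp₀ hp₁ m _),
        ← ENNReal.ofReal_mul (binomialCdf_nonneg hp₀ hp₁ m _),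
        ← ENNReal.ofReal_add (mul_nonneg (binomialCdf_nonneg hp₀ hp₁ m _) hq)
          (mul_nonneg (binomialCdf_nonneg hp₀ hp₁ m _) hp₀)]
      congr 1
      ring

lemma measure_le_prefixSum [IsProbabilityMeasure μ] (hA : ∀ j, Measurable (A j))
    (hA01 : ∀ j ω, A j ω = 0 ∨ A j ω = 1)
    (hindep : iIndepFun A μ) (hp₀ : 0 ≤ p) (hp₁ : p ≤ 1)
    (hber : ∀ j, μ {ω | A j ω = 1} = ENNReal.ofReal p) {m : ℕ} (hm : m ≤ n) (k : ℕ) :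
    μ {ω | k ≤ prefixSum (A · ω) m} = ENNReal.ofReal (1 - binomialCdf p m k) := by
  have hcompl : {ω | k ≤ prefixSum (A · ω) m} = {ω | prefixSum (A · ω) m < k}ᶜ := by
    ext ω
    simp
  have hmeas : MeasurableSet {ω | prefixSum (A · ω) m < k} :=
    measurable_prefixSum hA m measurableSet_Iio
  rw [hcompl, prob_compl_eq_one_sub hmeas,
    measure_prefixSum_lt hA hA01 hindep hp₀ hp₁ hber hm,
    ENNReal.ofReal_sub 1 (binomialCdf_nonneg hp₀ hp₁ m k), ENNReal.ofReal_one]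

end BernoulliSums

theorem shrinking_stopped_bernoulli_sum_negBinomial_dominated_general
    {Ω : Type*} [MeasurableSpace Ω] (μ : Measure Ω) [IsProbabilityMeasure μ]
    (n v : ℕ) (hv : 1 ≤ v)
    (pstar : ℝ) (hp : pstar ∈ Set.Ioo (0:ℝ) 1)
    (A : Fin n → Ω → ℕ) (hAm : ∀ j, Measurable (A j))
    (hA01 : ∀ j ω, A j ω = 0 ∨ A j ω = 1)
    (hindep : iIndepFun A μ)
    (hber : ∀ j, μ {ω | A j ω = 1} = ENNReal.ofReal pstar)
    (M : ℕ → Ω → ℕ)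
    (hM : ∀ t ω, M t ω = ∑ j ∈ Finset.univ.filter (fun j : Fin n => j.val < n - t), A j ω)
    (τ : Ω → ℕ)
    (hτ : ∀ ω, τ ω = sInf {t : ℕ | t ≤ n - 1 ∧ ((n - t) - M t ω < v ∨ t = n - 1)}) :
    ∀ k : ℕ, μ {ω | k ≤ M (τ ω) ω}
      ≤ ENNReal.ofReal (∑' i : ℕ,
          ((v + (k + i) - 1).choose (k + i) : ℝ) * pstar ^ (k + i) * (1 - pstar) ^ v) := by
  intro k
  have hp₀ : 0 ≤ pstar := hp.1.le
  have hp₁ : pstar ≤ 1 := hp.2.le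
  have hstopped : {ω | k ≤ M (τ ω) ω} ⊆ {ω | k ≤ prefixSum (A · ω) (min n (k + v - 1))} := by
    intro ω hω
    have hτmem : τ ω ∈ {t : ℕ | t ≤ n - 1 ∧ ((n - t) - M t ω < v ∨ t = n - 1)} :=
      hτ ω ▸ Nat.sInf_mem ⟨n - 1, le_rfl, Or.inr rfl⟩
    obtain ⟨-, hstop⟩ := hτmem
    rw [hM] at hstop
    have hk : k ≤ prefixSum (A · ω) (n - τ ω) := (hM (τ ω) ω).le.trans' hω
    exact le_prefixSum_min (fun j => by rcases hA01 j ω with h | h <;> omega) hv (n.sub_le _)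
      (hstop.imp_right fun h => by omega) hk
  calc μ {ω | k ≤ M (τ ω) ω}
      ≤ μ {ω | k ≤ prefixSum (A · ω) (min n (k + v - 1))} := measure_mono hstopped
    _ = ENNReal.ofReal (1 - binomialCdf pstar (min n (k + v - 1)) k) :=
      measure_le_prefixSum hAm hA01 hindep hp₀ hp₁ hber (min_le_left _ _) k
    _ ≤ ENNReal.ofReal (1 - binomialCdf pstar (k + v - 1) k) :=
      ENNReal.ofReal_le_ofReal <| sub_le_sub_left
        (binomialCdf_antitone hp₀ hp₁ k (min_le_right _ _)) 1
    _ = ENNReal.ofReal (∑' i, negBinomialPmf v pstar (k + i)) := by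
      rw [binomialCdf_add_pred_eq_sum_negBinomialPmf hv,
        tsum_negBinomialPmf_nat_add hv (abs_lt.2 ⟨by linarith [hp.1], hp.2⟩)]

/-- For i.i.d. Bernoulli(p*) variables `A_1,…,A_n`, shrinking sums
`M̃_t = Σ_{j=1}^{n-t} A_j`, and the stopping time
`τ̃ = min{t ∈ {0,…,n-1} : (n-t) - M̃_t < v or t = n-1}` (where `v ≥ 1`), the stopped
sum `M̃_{τ̃}` is stochastically dominated by `NB(v, p*)`: for every `k`,
`ℙ(M̃_{τ̃} ≥ k) ≤ Σ_{i ≥ k} C(v+i-1, i)·p*^i·(1-p*)^v`. -/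
theorem shrinking_stopped_bernoulli_sum_negBinomial_dominated
    {Ω : Type*} [MeasurableSpace Ω] (μ : Measure Ω) [IsProbabilityMeasure μ]
    (n v : ℕ) (hn : 1 ≤ n) (hv : 1 ≤ v)
    (pstar : ℝ) (hp : pstar ∈ Set.Ioo (0:ℝ) 1)
    (A : Fin n → Ω → ℕ) (hAm : ∀ j, Measurable (A j))
    (hA01 : ∀ j ω, A j ω = 0 ∨ A j ω = 1)
    (hindep : iIndepFun A μ)
    (hber : ∀ j, μ {ω | A j ω = 1} = ENNReal.ofReal pstar)
    (M : ℕ → Ω → ℕ)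
    (hM : ∀ t ω, M t ω = ∑ j ∈ Finset.univ.filter (fun j : Fin n => j.val < n - t), A j ω)
    (τ : Ω → ℕ)
    (hτ : ∀ ω, τ ω = sInf {t : ℕ | t ≤ n - 1 ∧ ((n - t) - M t ω < v ∨ t = n - 1)}) :
    ∀ k : ℕ, μ {ω | k ≤ M (τ ω) ω}
      ≤ ENNReal.ofReal (∑' i : ℕ,
          ((v + (k + i) - 1).choose (k + i) : ℝ) * pstar ^ (k + i) * (1 - pstar) ^ v) :=
  shrinking_stopped_bernoulli_sum_negBinomial_dominated_general μ n v hv pstar hp A hAm hA01 hindep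
    hber M hM τ hτ
end
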